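/- arXiv:1608.08702 — 10 statements merged into one kernel-verified Lean document; each statement's English description precedes it below -/
import Mathlib

section
/- Let G be a connected non-regular graph with adjacency matrix A, degree vector d = Aj, and suppose Ad = αd + βj for real numbers α, β. Then G has exactly two main eigenvalues, namely μ₀ = (α + √(α² + 4β))/2 and μ₁ = (α − √(α² + 4β))/2, and in particular α² + 4β ≥ 0. -/
open Matrix

def SimpleGraph.IsMainEigenvalue {V : Type*} [Fintype V] [DecidableEq V]
    (G : SimpleGraph V) [DecidableRel G.Adj] (μ : ℝ) : Prop :=
  ∃ x : V → ℝ, x ≠ 0 ∧ (G.adjMatrix ℝ).mulVec x = μ • x ∧ x ⬝ᵥ (fun _ => (1 : ℝ)) ≠ 0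

theorem stmt_2 {V : Type*} [Fintype V] [DecidableEq V]
    (G : SimpleGraph V) [DecidableRel G.Adj] (hG : G.Connected)
    (hnonreg : ¬ ∃ k : ℕ, G.IsRegularOfDegree k)
    (α β : ℝ)
    (hlin : (G.adjMatrix ℝ).mulVec ((G.adjMatrix ℝ).mulVec (fun _ => (1 : ℝ))) =
      α • (G.adjMatrix ℝ).mulVec (fun _ => (1 : ℝ)) + β • (fun _ => (1 : ℝ))) :
    0 ≤ α ^ 2 + 4 * β ∧
    (α + Real.sqrt (α ^ 2 + 4 * β)) / 2 ≠ (α - Real.sqrt (α ^ 2 + 4 * β)) / 2 ∧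
    {μ : ℝ | G.IsMainEigenvalue μ} =
      {(α + Real.sqrt (α ^ 2 + 4 * β)) / 2, (α - Real.sqrt (α ^ 2 + 4 * β)) / 2} := by
  classical
  have hne : Nonempty V := hG.nonempty
  set A := G.adjMatrix ℝ with hA
  set j : V → ℝ := (fun _ => (1 : ℝ)) with hj
  set d : V → ℝ := A.mulVec j with hd
  -- symmetry of A
  have hsym : ∀ x y : V → ℝ, x ⬝ᵥ A.mulVec y = A.mulVec x ⬝ᵥ y := by
    intro x y
    rw [dotProduct_mulVec, ← mulVec_transpose, hA, SimpleGraph.transpose_adjMatrix]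
  have hdeg : ∀ v, d v = (G.degree v : ℝ) := by
    intro v
    simp [hd, hj, hA, SimpleGraph.adjMatrix_mulVec_const_apply]
  -- d is not a multiple of j
  have hdnp : ∀ t : ℝ, d ≠ t • j := by
    intro t ht
    obtain ⟨v₀⟩ := hne
    apply hnonreg
    refine ⟨G.degree v₀, fun v => ?_⟩
    have h1 := congrFun ht v
    have h2 := congrFun ht v₀
    rw [hdeg] at h1 h2
    simp only [Pi.smul_apply, hj, smul_eq_mul, mul_one] at h1 h2
    exact_mod_cast h1.trans h2.symm
  set a : ℝ := j ⬝ᵥ j with ha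
  set b : ℝ := j ⬝ᵥ d with hb
  set c : ℝ := d ⬝ᵥ d with hc
  have hapos : 0 < a := by
    rw [ha, hj]
    simp [dotProduct]
    exact_mod_cast Fintype.card_pos
  have hca : c = α * b + β * a := by
    calc c = A.mulVec j ⬝ᵥ d := by rw [hc, hd]
    _ = j ⬝ᵥ A.mulVec d := (hsym j d).symm
    _ = j ⬝ᵥ (α • d + β • j) := by rw [hlin]
    _ = α * b + β * a := by
        simp [dotProduct_add, dotProduct_smul, smul_eq_mul, hb, ha]
  have hpos : ∀ x : V → ℝ, x ≠ 0 → 0 < x ⬝ᵥ x := by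
    intro x hx
    have h0 : x ⬝ᵥ x ≠ 0 := fun h => hx (dotProduct_self_eq_zero.mp h)
    have h1 : 0 ≤ x ⬝ᵥ x := Finset.sum_nonneg fun i _ => mul_self_nonneg (x i)
    exact h1.lt_of_ne (Ne.symm h0)
  have hdjb : d ⬝ᵥ j = b := by rw [hb, dotProduct_comm]
  -- strict Cauchy-Schwarz
  have hbac : b ^ 2 < a * c := by
    set t : ℝ := b / a with htdef
    have hta : t * a = b := div_mul_cancel₀ b hapos.ne'
    have hwne : d - t • j ≠ 0 := fun h => hdnp t (sub_eq_zero.mp h)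
    have hw := hpos _ hwne
    have hexp : (d - t • j) ⬝ᵥ (d - t • j) = c - 2 * t * b + t ^ 2 * a := by
      simp [sub_dotProduct, dotProduct_sub, smul_dotProduct, dotProduct_smul,
        smul_eq_mul, hdjb, ← hb, ← ha, ← hc]
      ring
    rw [hexp] at hw
    have h2 := mul_pos hapos hw
    have hta2 : (t * a) ^ 2 = b ^ 2 := by rw [hta]
    nlinarith [hta, hta2, h2]
  have hdisc : 0 < α ^ 2 + 4 * β := by
    nlinarith [hbac, hca, hapos, sq_nonneg (2 * b - α * a), mul_pos hapos hapos]
  set s : ℝ := Real.sqrt (α ^ 2 + 4 * β) with hs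
  have hs2 : s ^ 2 = α ^ 2 + 4 * β := Real.sq_sqrt hdisc.le
  have hspos : 0 < s := Real.sqrt_pos.mpr hdisc
  set μ₀ : ℝ := (α + s) / 2 with hμ₀
  set μ₁ : ℝ := (α - s) / 2 with hμ₁
  have hsum : μ₀ + μ₁ = α := by rw [hμ₀, hμ₁]; ring
  have hprod : μ₀ * μ₁ = -β := by
    rw [hμ₀, hμ₁]
    linear_combination (-(1 : ℝ) / 4) * hs2
  have hμdiff : μ₀ - μ₁ = s := by rw [hμ₀, hμ₁]; ring
  have hμne : μ₀ ≠ μ₁ := by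
    intro h
    rw [h, sub_self] at hμdiff
    exact hspos.ne hμdiff
  -- eigenvector equation
  have heig : ∀ μ ν : ℝ, μ + ν = α → μ * ν = -β →
      A.mulVec (d - ν • j) = μ • (d - ν • j) := by
    intro μ ν h1 h2
    rw [mulVec_sub, mulVec_smul, hlin, ← hd]
    funext v
    simp only [Pi.add_apply, Pi.sub_apply, Pi.smul_apply, smul_eq_mul, hj]
    linear_combination (-(d v)) * h1 + h2
  -- orthogonality of the two eigenvectors in W
  have horth : ∀ μ ν : ℝ, μ + ν = α → μ * ν = -β →
      (d - ν • j) ⬝ᵥ (d - μ • j) = 0 := by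
    intro μ ν h1 h2
    have hexp : (d - ν • j) ⬝ᵥ (d - μ • j) = c - (μ + ν) * b + (μ * ν) * a := by
      simp [sub_dotProduct, dotProduct_sub, smul_dotProduct, dotProduct_smul,
        smul_eq_mul, hdjb, ← hb, ← ha, ← hc]
      ring
    rw [hexp, h1, h2, hca]
    ring
  -- main eigenvalue construction
  have main_of : ∀ μ ν : ℝ, μ + ν = α → μ * ν = -β → μ ≠ ν → G.IsMainEigenvalue μ := by
    intro μ ν h1 h2 hνne
    have hyne : d - ν • j ≠ 0 := fun h => hdnp ν (sub_eq_zero.mp h)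
    refine ⟨d - ν • j, hyne, heig μ ν h1 h2, ?_⟩
    intro h0
    have h0' : (d - ν • j) ⬝ᵥ j = 0 := h0
    have hsplit : (d - ν • j) ⬝ᵥ (d - ν • j) =
        (d - ν • j) ⬝ᵥ (d - μ • j) + (μ - ν) * ((d - ν • j) ⬝ᵥ j) := by
      have : d - ν • j = (d - μ • j) + (μ - ν) • j := by
        funext v; simp [Pi.add_apply, Pi.sub_apply, Pi.smul_apply, smul_eq_mul]; ring
      conv_lhs => rw [this]
      simp [dotProduct_add, dotProduct_smul, smul_eq_mul, this]
    rw [horth μ ν h1 h2, h0', mul_zero, add_zero] at hsplit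
    exact (hpos _ hyne).ne' hsplit
  refine ⟨hdisc.le, hμne, ?_⟩
  ext μ
  simp only [Set.mem_setOf_eq, Set.mem_insert_iff, Set.mem_singleton_iff]
  constructor
  · rintro ⟨x, hx0, hxe, hxj⟩
    by_contra hcon
    push_neg at hcon
    obtain ⟨hne0, hne1⟩ := hcon
    have hxj' : x ⬝ᵥ j ≠ 0 := hxj
    have key : ∀ ν ν' : ℝ, ν + ν' = α → ν * ν' = -β → μ ≠ ν → x ⬝ᵥ (d - ν' • j) = 0 := by
      intro ν ν' h1 h2 hμν
      have h3 : μ * (x ⬝ᵥ (d - ν' • j)) = ν * (x ⬝ᵥ (d - ν' • j)) := by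
        calc μ * (x ⬝ᵥ (d - ν' • j)) = (μ • x) ⬝ᵥ (d - ν' • j) := by
              rw [smul_dotProduct]; simp [smul_eq_mul]
        _ = A.mulVec x ⬝ᵥ (d - ν' • j) := by rw [← hxe]
        _ = x ⬝ᵥ A.mulVec (d - ν' • j) := (hsym x _).symm
        _ = x ⬝ᵥ (ν • (d - ν' • j)) := by rw [heig ν ν' h1 h2]
        _ = ν * (x ⬝ᵥ (d - ν' • j)) := by rw [dotProduct_smul]; simp [smul_eq_mul]
      have h4 : (μ - ν) * (x ⬝ᵥ (d - ν' • j)) = 0 := by linarith [h3]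
      exact (mul_eq_zero.mp h4).resolve_left (sub_ne_zero.mpr hμν)
    have k0 : x ⬝ᵥ (d - μ₁ • j) = 0 := key μ₀ μ₁ hsum hprod hne0
    have k1 : x ⬝ᵥ (d - μ₀ • j) = 0 := key μ₁ μ₀ (by linarith [hsum]) (by rw [mul_comm]; exact hprod) hne1
    have hdiffvec : (d - μ₁ • j) - (d - μ₀ • j) = (μ₀ - μ₁) • j := by
      funext v; simp [Pi.sub_apply, Pi.smul_apply, smul_eq_mul]; ring
    have h5 : (μ₀ - μ₁) * (x ⬝ᵥ j) = 0 := by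
      calc (μ₀ - μ₁) * (x ⬝ᵥ j) = x ⬝ᵥ ((μ₀ - μ₁) • j) := by
            rw [dotProduct_smul]; simp [smul_eq_mul]
      _ = x ⬝ᵥ ((d - μ₁ • j) - (d - μ₀ • j)) := by rw [hdiffvec]
      _ = 0 := by rw [dotProduct_sub, k0, k1, sub_zero]
    exact hxj' ((mul_eq_zero.mp h5).resolve_left (sub_ne_zero.mpr hμne))
  · rintro (rfl | rfl)
    · exact main_of μ₀ μ₁ hsum hprod hμne
    · exact main_of μ₁ μ₀ (by linarith [hsum]) (by rw [mul_comm]; exact hprod) (Ne.symm hμne)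
end

section
/- A connected finite simple graph G with spectral radius ρ > 0 is harmonic and non-regular if and only if the only main eigenvalues of G are ρ and 0. -/
open Matrix

/-!
If `A d = δ d` with `d = A 1`, a nonnegative Perron vector `z` for `ρ` (obtained from `|x|` by the
Rayleigh-quotient characterization of the top eigenvalue) satisfies `z ⬝ᵥ d = ρ (z ⬝ᵥ 1) ≠ 0`, which
forces `δ = ρ`. Pairing `A² 1 = ρ A 1` with an eigenvector `x` gives `μ² (x ⬝ᵥ 1) = ρ μ (x ⬝ᵥ 1)`,
so main eigenvalues lie in `{ρ, 0}`; conversely, expanding `1` in an orthonormal eigenbasis shows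
that this containment gives back `A² 1 = ρ A 1`. The vector `y = 1 - d / ρ` lies in the kernel of
`A` and is orthogonal to `d`, so `y ⬝ᵥ 1 = y ⬝ᵥ y`, which is nonzero exactly when `G` is not
regular. Finally `ρ` is an eigenvalue of an integer matrix, hence an algebraic integer, and the
quotient `(Σ_{u ~ v} deg u) / deg v`, hence rational; so it is an integer.
-/

open scoped MatrixOrder

namespace Matrix

variable {n : Type*} [Fintype n]

theorem IsSymm.mulVec_dotProduct_comm {α : Type*} [CommSemiring α] {A : Matrix n n α}
    (hA : A.IsSymm) (x y : n → α) : A *ᵥ x ⬝ᵥ y = x ⬝ᵥ A *ᵥ y := by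
  rw [dotProduct_mulVec, ← vecMul_transpose, hA.eq]

theorem IsSymm.dotProduct_mulVec_of_mulVec_eq_smul {α : Type*} [CommSemiring α]
    {A : Matrix n n α} (hA : A.IsSymm) {x : n → α} {μ : α} (hx : A *ᵥ x = μ • x) (y : n → α) :
    x ⬝ᵥ A *ᵥ y = μ * (x ⬝ᵥ y) := by
  rw [← hA.mulVec_dotProduct_comm, hx, smul_dotProduct, smul_eq_mul]

theorem IsSymm.eq_of_mulVec_eq_smul_of_dotProduct_ne_zero {α : Type*} [CommRing α] [IsDomain α]
    {A : Matrix n n α} (hA : A.IsSymm) {x y : n → α} {μ ν : α} (hx : A *ᵥ x = μ • x)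
    (hy : A *ᵥ y = ν • y) (hxy : x ⬝ᵥ y ≠ 0) : μ = ν := by
  have h := hA.dotProduct_mulVec_of_mulVec_eq_smul hx y
  rw [hy, dotProduct_smul, smul_eq_mul] at h
  exact (mul_right_cancel₀ hxy h).symm

variable [DecidableEq n]

theorem exists_mulVec_eq_smul_of_mem_spectrum {K : Type*} [Field K] {A : Matrix n n K} {μ : K}
    (h : μ ∈ spectrum K A) : ∃ x ≠ 0, A *ᵥ x = μ • x := by
  rw [← spectrum_toLin', ← Module.End.hasEigenvalue_iff_mem_spectrum] at h
  obtain ⟨x, hx⟩ := h.exists_hasEigenvector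
  exact ⟨x, hx.2, by simpa using hx.apply_eq_smul⟩

theorem isIntegral_of_map_intCast_mulVec_eq_smul {K : Type*} [Field K] {M : Matrix n n ℤ}
    {x : n → K} {μ : K} (hx : x ≠ 0) (h : M.map (Int.castRingHom K) *ᵥ x = μ • x) :
    IsIntegral ℤ μ := by
  refine ⟨M.charpoly, M.charpoly_monic, ?_⟩
  have hdet : (scalar n μ - M.map (Int.castRingHom K)).det = 0 :=
    exists_mulVec_eq_zero_iff.mp ⟨x, hx, by rw [sub_mulVec, h]; simp⟩
  rw [← Polynomial.eval_map, algebraMap_int_eq, ← charpoly_map, eval_charpoly, hdet]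

namespace IsHermitian

variable {A : Matrix n n ℝ}

theorem posSemidef_algebraMap_sub (hA : A.IsHermitian) {ρ : ℝ}
    (hρ : ∀ μ : ℝ, (∃ x ≠ 0, A *ᵥ x = μ • x) → μ ≤ ρ) :
    (algebraMap ℝ (Matrix n n ℝ) ρ - A).PosSemidef :=
  le_algebraMap_of_spectrum_le (fun μ hμ ↦ hρ μ (exists_mulVec_eq_smul_of_mem_spectrum hμ)) hA

theorem mulVec_eq_smul_of_le_dotProduct_mulVec (hA : A.IsHermitian) {ρ : ℝ}
    (hρ : ∀ μ : ℝ, (∃ x ≠ 0, A *ᵥ x = μ • x) → μ ≤ ρ) {z : n → ℝ}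
    (hz : ρ * (z ⬝ᵥ z) ≤ z ⬝ᵥ A *ᵥ z) : A *ᵥ z = ρ • z := by
  have hB := hA.posSemidef_algebraMap_sub hρ
  have hBz : (algebraMap ℝ (Matrix n n ℝ) ρ - A) *ᵥ z = ρ • z - A *ᵥ z := by
    rw [sub_mulVec, Algebra.algebraMap_eq_smul_one, smul_mulVec, one_mulVec]
  have hzBz : star z ⬝ᵥ (algebraMap ℝ (Matrix n n ℝ) ρ - A) *ᵥ z = 0 := by
    refine le_antisymm ?_ (hB.dotProduct_mulVec_nonneg z)
    rw [hBz, star_trivial, dotProduct_sub, dotProduct_smul, smul_eq_mul]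
    linarith
  have := (hB.dotProduct_mulVec_zero_iff z).mp hzBz
  rwa [hBz, sub_eq_zero, eq_comm] at this

theorem mulVec_abs_eq_smul_abs (hA : A.IsHermitian) (hA₀ : ∀ i j, 0 ≤ A i j) {ρ : ℝ}
    (hρ₀ : 0 ≤ ρ) (hρ : ∀ μ : ℝ, (∃ x ≠ 0, A *ᵥ x = μ • x) → μ ≤ ρ) {x : n → ℝ}
    (hx : A *ᵥ x = ρ • x) : A *ᵥ |x| = ρ • |x| := by
  have hle : ∀ i, ρ * |x i| ≤ (A *ᵥ |x|) i := fun i ↦ calc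
    ρ * |x i| = |(A *ᵥ x) i| := by rw [hx, Pi.smul_apply, smul_eq_mul, abs_mul, abs_of_nonneg hρ₀]
    _ ≤ ∑ j, |A i j * x j| := Finset.abs_sum_le_sum_abs _ _
    _ = (A *ᵥ |x|) i := by simp [mulVec, dotProduct, abs_mul, abs_of_nonneg (hA₀ i _)]
  refine hA.mulVec_eq_smul_of_le_dotProduct_mulVec hρ ?_
  simp only [dotProduct, Finset.mul_sum, Pi.abs_apply]
  exact Finset.sum_le_sum fun i _ ↦ by
    nlinarith [mul_le_mul_of_nonneg_left (hle i) (abs_nonneg (x i))]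

theorem eq_zero_of_forall_eigenvectorBasis_dotProduct_eq_zero (hA : A.IsHermitian) {u : n → ℝ}
    (hu : ∀ i, ⇑(hA.eigenvectorBasis i) ⬝ᵥ u = 0) : u = 0 := by
  have h := hA.eigenvectorBasis.sum_repr' (WithLp.toLp 2 u)
  simp only [EuclideanSpace.inner_eq_star_dotProduct, star_trivial, dotProduct_comm u, hu,
    zero_smul, Finset.sum_const_zero] at h
  simpa using congrArg WithLp.ofLp h.symm

theorem mulVec_mulVec_eq_smul_mulVec_iff (hA : A.IsHermitian) (w : n → ℝ) (ρ : ℝ) :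
    A *ᵥ (A *ᵥ w) = ρ • A *ᵥ w ↔
      ∀ μ x, A *ᵥ x = μ • x → x ⬝ᵥ w ≠ 0 → μ = ρ ∨ μ = 0 := by
  have hS : A.IsSymm := isHermitian_iff_isSymm.mp hA
  constructor
  · intro h μ x hx hxw
    have key : μ * (μ * (x ⬝ᵥ w)) = ρ * (μ * (x ⬝ᵥ w)) := by
      rw [← hS.dotProduct_mulVec_of_mulVec_eq_smul hx, ← hS.dotProduct_mulVec_of_mulVec_eq_smul hx,
        h, dotProduct_smul, smul_eq_mul]
    have : (μ - ρ) * μ * (x ⬝ᵥ w) = 0 := by linear_combination key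
    simpa [hxw, sub_eq_zero] using this
  · intro h
    rw [← sub_eq_zero]
    refine hA.eq_zero_of_forall_eigenvectorBasis_dotProduct_eq_zero fun i ↦ ?_
    have hi := hA.mulVec_eigenvectorBasis i
    rw [dotProduct_sub, dotProduct_smul, hS.dotProduct_mulVec_of_mulVec_eq_smul hi,
      hS.dotProduct_mulVec_of_mulVec_eq_smul hi, smul_eq_mul]
    by_cases hw : ⇑(hA.eigenvectorBasis i) ⬝ᵥ w = 0
    · simp [hw]
    · rcases h _ _ hi hw with hρ | h0 <;> simp [*]

end IsHermitian

end Matrix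

theorem exists_intCast_eq_of_isIntegral {K : Type*} [Field K] [CharZero K] {x : K}
    (hx : IsIntegral ℤ x) {q : ℚ} (hq : (q : K) = x) : ∃ m : ℤ, (m : K) = x := by
  have hq' : IsIntegral ℤ q :=
    (isIntegral_algHom_iff (algebraMap ℚ K).toIntAlgHom (algebraMap ℚ K).injective).mp
      (by simpa [hq] using hx)
  obtain ⟨m, rfl⟩ := IsIntegrallyClosed.isIntegral_iff.mp hq'
  exact ⟨m, by simpa using hq⟩

namespace SimpleGraph

variable {V : Type*} [Fintype V] {G : SimpleGraph V} [DecidableRel G.Adj]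

theorem adjMatrix_mulVec_one {α : Type*} [NonAssocSemiring α] :
    (G.adjMatrix α *ᵥ fun _ ↦ 1) = fun v ↦ (G.degree v : α) :=
  funext fun _ ↦ by simp

variable [DecidableEq V]

theorem isIntegral_of_adjMatrix_mulVec_eq_smul {x : V → ℝ} {μ : ℝ} (hx : x ≠ 0)
    (h : G.adjMatrix ℝ *ᵥ x = μ • x) : IsIntegral ℤ μ := by
  have hmap : G.adjMatrix ℝ = (G.adjMatrix ℤ).map (Int.castRingHom ℝ) := by
    ext; simp [adjMatrix_apply, apply_ite]
  exact isIntegral_of_map_intCast_mulVec_eq_smul hx (hmap ▸ h)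

theorem exists_intCast_eq_of_harmonic {ρ : ℝ} (hρ : ∃ x ≠ 0, G.adjMatrix ℝ *ᵥ x = ρ • x)
    (hhar : G.adjMatrix ℝ *ᵥ (G.adjMatrix ℝ *ᵥ fun _ ↦ 1) = ρ • G.adjMatrix ℝ *ᵥ fun _ ↦ 1)
    {v : V} (hv : G.degree v ≠ 0) : ∃ m : ℤ, (m : ℝ) = ρ := by
  obtain ⟨x, hx0, hx⟩ := hρ
  refine exists_intCast_eq_of_isIntegral (isIntegral_of_adjMatrix_mulVec_eq_smul hx0 hx)
    (q := (∑ u ∈ G.neighborFinset v, G.degree u : ℕ) / G.degree v) ?_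
  have h := congrFun hhar v
  rw [adjMatrix_mulVec_one, adjMatrix_mulVec_apply, Pi.smul_apply, smul_eq_mul] at h
  push_cast
  rw [div_eq_iff (by exact_mod_cast hv), h]

theorem isMainEigenvalue_zero_of_harmonic_of_not_regular {δ : ℕ} (hδ : 0 < δ)
    (hhar : G.adjMatrix ℝ *ᵥ (G.adjMatrix ℝ *ᵥ fun _ ↦ 1) = (δ : ℝ) • G.adjMatrix ℝ *ᵥ fun _ ↦ 1)
    (hreg : ¬ ∃ k : ℕ, G.IsRegularOfDegree k) : G.IsMainEigenvalue 0 := by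
  set d := G.adjMatrix ℝ *ᵥ fun _ ↦ (1 : ℝ)
  set y : V → ℝ := (fun _ ↦ 1) - (δ : ℝ)⁻¹ • d with hy_def
  have hδ' : (δ : ℝ) ≠ 0 := by positivity
  have hy : G.adjMatrix ℝ *ᵥ y = 0 := by
    rw [hy_def, mulVec_sub, mulVec_smul, hhar, smul_smul, inv_mul_cancel₀ hδ', one_smul, sub_self]
  have hy0 : y ≠ 0 := by
    refine fun h ↦ hreg ⟨δ, fun v ↦ ?_⟩
    have hv := congrFun h v
    simp only [hy_def, d, adjMatrix_mulVec_one, Pi.sub_apply, Pi.smul_apply, smul_eq_mul,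
      Pi.zero_apply, sub_eq_zero] at hv
    field_simp at hv
    exact_mod_cast hv.symm
  have hyd : y ⬝ᵥ d = 0 := by
    rw [← G.isSymm_adjMatrix.mulVec_dotProduct_comm, hy, zero_dotProduct]
  refine ⟨y, hy0, by rw [hy, zero_smul], ?_⟩
  have hyy : y ⬝ᵥ y = y ⬝ᵥ fun _ ↦ 1 := by
    nth_rewrite 2 [hy_def]
    rw [dotProduct_sub, dotProduct_smul, hyd, smul_zero, sub_zero]
  rw [← hyy]
  exact fun h ↦ hy0 (dotProduct_self_eq_zero.mp h)

theorem setOf_isMainEigenvalue_eq_of_harmonic {ρ : ℝ} (hρpos : 0 < ρ)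
    (hρeig : ∃ x : V → ℝ, x ≠ 0 ∧ G.adjMatrix ℝ *ᵥ x = ρ • x)
    (hρmax : ∀ μ : ℝ, (∃ x : V → ℝ, x ≠ 0 ∧ G.adjMatrix ℝ *ᵥ x = μ • x) → μ ≤ ρ)
    {δ : ℕ} (hδ : 0 < δ)
    (hhar : G.adjMatrix ℝ *ᵥ (G.adjMatrix ℝ *ᵥ fun _ ↦ 1) = (δ : ℝ) • G.adjMatrix ℝ *ᵥ fun _ ↦ 1)
    (hreg : ¬ ∃ k : ℕ, G.IsRegularOfDegree k) :
    {μ : ℝ | G.IsMainEigenvalue μ} = {ρ, 0} := by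
  obtain ⟨x, hx0, hx⟩ := hρeig
  have hz : G.adjMatrix ℝ *ᵥ |x| = ρ • |x| :=
    (G.isHermitian_adjMatrix ℝ).mulVec_abs_eq_smul_abs
      (fun _ _ ↦ by rw [adjMatrix_apply]; split_ifs <;> norm_num) hρpos.le hρmax hx
  have hz1 : |x| ⬝ᵥ (fun _ ↦ 1) ≠ 0 := by
    obtain ⟨v, hv⟩ := Function.ne_iff.mp hx0
    simp only [dotProduct, Pi.abs_apply, mul_one]
    exact (Finset.sum_pos' (fun v _ ↦ abs_nonneg (x v)) ⟨v, Finset.mem_univ v, abs_pos.mpr hv⟩).ne'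
  have hδρ : (δ : ℝ) = ρ := by
    refine (G.isSymm_adjMatrix.eq_of_mulVec_eq_smul_of_dotProduct_ne_zero hz hhar ?_).symm
    rw [G.isSymm_adjMatrix.dotProduct_mulVec_of_mulVec_eq_smul hz]
    exact mul_ne_zero hρpos.ne' hz1
  ext μ
  constructor
  · rintro ⟨y, -, hy, hy1⟩
    exact ((G.isHermitian_adjMatrix ℝ).mulVec_mulVec_eq_smul_mulVec_iff _ ρ).mp (hδρ ▸ hhar)
      μ y hy hy1
  · rintro (rfl | rfl)
    · exact ⟨|x|, by simpa using hx0, hz, hz1⟩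
    · exact isMainEigenvalue_zero_of_harmonic_of_not_regular hδ hhar hreg

theorem harmonic_and_not_regular_of_setOf_isMainEigenvalue_eq {ρ : ℝ} (hρpos : 0 < ρ)
    (hmain : {μ : ℝ | G.IsMainEigenvalue μ} = {ρ, 0}) :
    (∃ δ : ℕ, 0 < δ ∧
        G.adjMatrix ℝ *ᵥ (G.adjMatrix ℝ *ᵥ fun _ ↦ 1) = (δ : ℝ) • G.adjMatrix ℝ *ᵥ fun _ ↦ 1) ∧
      ¬ ∃ k : ℕ, G.IsRegularOfDegree k := by
  have hS := G.isSymm_adjMatrix (α := ℝ)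
  have hmain' (μ : ℝ) : G.IsMainEigenvalue μ ↔ μ = ρ ∨ μ = 0 := Set.ext_iff.mp hmain μ
  have hhar : G.adjMatrix ℝ *ᵥ (G.adjMatrix ℝ *ᵥ fun _ ↦ 1) = ρ • G.adjMatrix ℝ *ᵥ fun _ ↦ 1 :=
    ((G.isHermitian_adjMatrix ℝ).mulVec_mulVec_eq_smul_mulVec_iff _ ρ).mpr fun μ y hy hy1 ↦
      (hmain' μ).mp ⟨y, fun h ↦ hy1 (by simp [h]), hy, hy1⟩
  obtain ⟨x, hx0, hx, hx1⟩ := (hmain' ρ).mpr (Or.inl rfl)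
  have hxd : x ⬝ᵥ (G.adjMatrix ℝ *ᵥ fun _ ↦ 1) ≠ 0 := by
    rw [hS.dotProduct_mulVec_of_mulVec_eq_smul hx]
    exact mul_ne_zero hρpos.ne' hx1
  obtain ⟨v, hv⟩ : ∃ v, G.degree v ≠ 0 := by
    by_contra! h
    exact hxd (by simp [adjMatrix_mulVec_one, h])
  obtain ⟨m, hm⟩ := exists_intCast_eq_of_harmonic ⟨x, hx0, hx⟩ hhar hv
  have hm0 : 0 < m := by exact_mod_cast hm ▸ hρpos
  refine ⟨⟨m.toNat, by omega, ?_⟩, ?_⟩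
  · rwa [show ((m.toNat : ℕ) : ℝ) = ρ by rw [← hm]; exact_mod_cast Int.toNat_of_nonneg hm0.le]
  · rintro ⟨k, hk⟩
    obtain ⟨y, -, hy, hy1⟩ := (hmain' 0).mpr (Or.inr rfl)
    have hd : (G.adjMatrix ℝ *ᵥ fun _ ↦ 1) = (k : ℝ) • fun _ ↦ 1 := by
      ext; simp [hk.degree_eq]
    have hk0 : (k : ℝ) = 0 := by
      have h := hS.dotProduct_mulVec_of_mulVec_eq_smul hy (fun _ ↦ 1)
      rw [hd, dotProduct_smul, smul_eq_mul, zero_mul] at h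
      exact (mul_eq_zero.mp h).resolve_right hy1
    exact hxd (by rw [hd, hk0, zero_smul, dotProduct_zero])

end SimpleGraph

theorem stmt_3_general {V : Type*} [Fintype V] [DecidableEq V]
    (G : SimpleGraph V) [DecidableRel G.Adj]
    (ρ : ℝ) (hρpos : 0 < ρ)
    (hρeig : ∃ x : V → ℝ, x ≠ 0 ∧ (G.adjMatrix ℝ).mulVec x = ρ • x)
    (hρmax : ∀ μ : ℝ, (∃ x : V → ℝ, x ≠ 0 ∧ (G.adjMatrix ℝ).mulVec x = μ • x) → μ ≤ ρ) :
    ((∃ δ : ℕ, 0 < δ ∧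
        (G.adjMatrix ℝ).mulVec ((G.adjMatrix ℝ).mulVec (fun _ => (1 : ℝ))) =
          (δ : ℝ) • (G.adjMatrix ℝ).mulVec (fun _ => (1 : ℝ))) ∧
      ¬ ∃ k : ℕ, G.IsRegularOfDegree k) ↔
    {μ : ℝ | G.IsMainEigenvalue μ} = {ρ, 0} := by
  constructor
  · rintro ⟨⟨δ, hδ, hhar⟩, hreg⟩
    exact G.setOf_isMainEigenvalue_eq_of_harmonic hρpos hρeig hρmax hδ hhar hreg
  · exact G.harmonic_and_not_regular_of_setOf_isMainEigenvalue_eq hρpos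

theorem stmt_3 {V : Type*} [Fintype V] [DecidableEq V]
    (G : SimpleGraph V) [DecidableRel G.Adj] (hG : G.Connected)
    (ρ : ℝ) (hρpos : 0 < ρ)
    (hρeig : ∃ x : V → ℝ, x ≠ 0 ∧ (G.adjMatrix ℝ).mulVec x = ρ • x)
    (hρmax : ∀ μ : ℝ, (∃ x : V → ℝ, x ≠ 0 ∧ (G.adjMatrix ℝ).mulVec x = μ • x) → μ ≤ ρ) :
    ((∃ δ : ℕ, 0 < δ ∧
        (G.adjMatrix ℝ).mulVec ((G.adjMatrix ℝ).mulVec (fun _ => (1 : ℝ))) =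
          (δ : ℝ) • (G.adjMatrix ℝ).mulVec (fun _ => (1 : ℝ))) ∧
      ¬ ∃ k : ℕ, G.IsRegularOfDegree k) ↔
    {μ : ℝ | G.IsMainEigenvalue μ} = {ρ, 0} :=
  stmt_3_general G ρ hρpos hρeig hρmax
end

section
/- Let G be a finite simple graph with an equitable partition π whose quotient matrix Q has exactly r distinct eigenvalues. Then G has at most r main eigenvalues. -/
/-!
If `A x = μ x` and the partition `p` is equitable with quotient matrix `Q`, then summing `x` over
the cells gives a left eigenvector `φ` of `Q` for `μ`, because `A P = P Q` for the characteristic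
matrix `P` of the partition. The entries of `φ` add up to those of `x`, so `φ ≠ 0` as soon as `μ`
is main; and a matrix has the same eigenvalues as its transpose.
-/

open Matrix

section Eigenvalues

variable {n K : Type*} [Fintype n] [Field K]

theorem Matrix.finite_setOf_exists_mulVec_eq_smul (M : Matrix n n K) :
    {μ : K | ∃ x ≠ 0, M *ᵥ x = μ • x}.Finite := by
  refine (Module.End.finite_hasEigenvalue M.mulVecLin).subset ?_
  rintro μ ⟨x, hx0, hx⟩
  exact Module.End.hasEigenvalue_of_hasEigenvector
    ⟨Module.End.mem_eigenspace_iff.2 (by simpa using hx), hx0⟩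

variable [DecidableEq n]

theorem Matrix.exists_mulVec_eq_smul_iff_det_eq_zero (M : Matrix n n K) (μ : K) :
    (∃ x ≠ 0, M *ᵥ x = μ • x) ↔ (M - μ • 1).det = 0 := by
  simp only [← exists_mulVec_eq_zero_iff, sub_mulVec, smul_mulVec, one_mulVec, sub_eq_zero]

theorem Matrix.exists_mulVec_eq_smul_of_vecMul {M : Matrix n n K} {μ : K}
    (h : ∃ y ≠ 0, y ᵥ* M = μ • y) : ∃ x ≠ 0, M *ᵥ x = μ • x := by
  rw [exists_mulVec_eq_smul_iff_det_eq_zero, ← det_transpose, transpose_sub, transpose_smul,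
    transpose_one, ← exists_mulVec_eq_smul_iff_det_eq_zero]
  simpa only [mulVec_transpose] using h

end Eigenvalues

section PartitionMatrix

variable {V ι : Type*} [DecidableEq ι] (R : Type*) [Semiring R] (p : V → ι)

def partitionMatrix : Matrix V ι R :=
  of fun v j => if p v = j then 1 else 0

theorem partitionMatrix_mulVec [Fintype ι] (y : ι → R) : partitionMatrix R p *ᵥ y = y ∘ p := by
  ext v
  simp [partitionMatrix, mulVec, dotProduct]

theorem partitionMatrix_mul_apply [Fintype ι] (B : Matrix ι ι R) (v : V) (j : ι) :
    (partitionMatrix R p * B) v j = B (p v) j := by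
  simp [partitionMatrix, mul_apply]

end PartitionMatrix

namespace SimpleGraph

variable {V ι : Type*} [Fintype V] [Fintype ι] [DecidableEq ι]
  {G : SimpleGraph V} [DecidableRel G.Adj] {p : V → ι} {Q : Matrix ι ι ℕ}

variable (G) in
def IsEquitable (p : V → ι) (Q : Matrix ι ι ℕ) : Prop :=
  ∀ v j, ((G.neighborFinset v).filter (fun w => p w = j)).card = Q (p v) j

theorem IsEquitable.adjMatrix_mul_partitionMatrix (hp : G.IsEquitable p Q)
    (R : Type*) [Semiring R] :
    G.adjMatrix R * partitionMatrix R p = partitionMatrix R p * Q.map (Nat.cast : ℕ → R) := by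
  ext v j
  rw [partitionMatrix_mul_apply, map_apply, ← hp v j, Finset.natCast_card_filter,
    neighborFinset_eq_filter, Finset.sum_filter]
  simp [mul_apply, partitionMatrix, adjMatrix_apply, ← ite_and, and_comm]

variable [DecidableEq V]

theorem IsMainEigenvalue.exists_vecMul_eq_smul {μ : ℝ} (hμ : G.IsMainEigenvalue μ)
    (hp : G.IsEquitable p Q) :
    ∃ φ ≠ 0, φ ᵥ* Q.map (Nat.cast : ℕ → ℝ) = μ • φ := by
  obtain ⟨x, -, hAx, hx1⟩ := hμ
  have hxA : x ᵥ* G.adjMatrix ℝ = μ • x := by rw [← mulVec_transpose, transpose_adjMatrix, hAx]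
  refine ⟨x ᵥ* partitionMatrix ℝ p, fun hφ => hx1 ?_, ?_⟩
  · calc x ⬝ᵥ (fun _ => 1) = x ⬝ᵥ (partitionMatrix ℝ p *ᵥ fun _ => 1) := by
          rw [partitionMatrix_mulVec]; rfl
      _ = 0 := by rw [dotProduct_mulVec, hφ, zero_dotProduct]
  · calc x ᵥ* partitionMatrix ℝ p ᵥ* Q.map Nat.cast
        = (x ᵥ* G.adjMatrix ℝ) ᵥ* partitionMatrix ℝ p := by
          rw [vecMul_vecMul, vecMul_vecMul, hp.adjMatrix_mul_partitionMatrix ℝ]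
      _ = μ • (x ᵥ* partitionMatrix ℝ p) := by
          rw [hxA, smul_vecMul]

theorem IsMainEigenvalue.exists_mulVec_eq_smul {μ : ℝ} (hμ : G.IsMainEigenvalue μ)
    (hp : G.IsEquitable p Q) :
    ∃ y ≠ 0, Q.map (Nat.cast : ℕ → ℝ) *ᵥ y = μ • y :=
  exists_mulVec_eq_smul_of_vecMul (hμ.exists_vecMul_eq_smul hp)

end SimpleGraph

theorem stmt_4_general {V : Type*} [Fintype V] [DecidableEq V]
    (G : SimpleGraph V) [DecidableRel G.Adj]
    (t : ℕ) (p : V → Fin t)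
    (Q : Matrix (Fin t) (Fin t) ℕ)
    (heq : ∀ v : V, ∀ j : Fin t,
      ((G.neighborFinset v).filter (fun w => p w = j)).card = Q (p v) j)
    (r : ℕ)
    (hr : {μ : ℝ | ∃ x : Fin t → ℝ, x ≠ 0 ∧ (Q.map (Nat.cast : ℕ → ℝ)).mulVec x = μ • x}.ncard = r) :
    {μ : ℝ | G.IsMainEigenvalue μ}.ncard ≤ r := by
  rw [← hr]
  exact Set.ncard_le_ncard (fun μ hμ => hμ.exists_mulVec_eq_smul heq)
    (finite_setOf_exists_mulVec_eq_smul _)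

theorem stmt_4 {V : Type*} [Fintype V] [DecidableEq V]
    (G : SimpleGraph V) [DecidableRel G.Adj]
    (t : ℕ) (p : V → Fin t) (hsurj : Function.Surjective p)
    (Q : Matrix (Fin t) (Fin t) ℕ)
    (heq : ∀ v : V, ∀ j : Fin t,
      ((G.neighborFinset v).filter (fun w => p w = j)).card = Q (p v) j)
    (r : ℕ)
    (hr : {μ : ℝ | ∃ x : Fin t → ℝ, x ≠ 0 ∧ (Q.map (Nat.cast : ℕ → ℝ)).mulVec x = μ • x}.ncard = r) :
    {μ : ℝ | G.IsMainEigenvalue μ}.ncard ≤ r :=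
  stmt_4_general G t p Q heq r hr
end

section
/- If G is a connected finite simple graph whose valency (degree) partition into exactly two classes is equitable, then G has exactly two main eigenvalues. -/
/-!
The characteristic vectors of the two degree classes span an `A`-invariant plane containing `1`,
on which `A` acts by the quotient matrix `B = !![b₁₁, b₁₂; b₂₁, b₂₂]`. Connectivity gives an edge
between the classes, so `b₁₂ b₂₁ > 0` and `B` has two distinct real eigenvalues `μ ≠ ν`; their
lifted eigenvectors `x, y` span the plane. An eigenvector `z` of `A` with `z ⬝ᵥ 1 ≠ 0` cannot be
orthogonal to both `x` and `y`, so its eigenvalue is `μ` or `ν`. Conversely, if `x ⬝ᵥ 1 = 0`, then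
since `x ⊥ y` the vector `1` is a multiple of `y`, hence an eigenvector of `A`, and `G` would be
regular.
-/

open Matrix

theorem Real.exists_ne_sub_mul_sub_eq_of_pos {a d e : ℝ} (he : 0 < e) :
    ∃ μ ν : ℝ, μ ≠ ν ∧ (μ - a) * (μ - d) = e ∧ (ν - a) * (ν - d) = e := by
  set s := √((a - d) ^ 2 + 4 * e)
  have hs : 0 < s := Real.sqrt_pos.mpr (by positivity)
  have hs2 : s ^ 2 = (a - d) ^ 2 + 4 * e := Real.sq_sqrt (by positivity)
  refine ⟨(a + d + s) / 2, (a + d - s) / 2, by intro h; linarith, ?_, ?_⟩ <;>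
    linear_combination hs2 / 4

theorem exists_smul_add_smul_ite_eq_one {V R : Type*} [Field R] (P : V → Prop) [DecidablePred P]
    {p a μ ν : R} (hp : p ≠ 0) (hμν : μ ≠ ν) :
    ∃ α β : R, α • (fun v => if P v then p else μ - a) +
      β • (fun v => if P v then p else ν - a) = 1 := by
  have hμν' : μ - ν ≠ 0 := sub_ne_zero.mpr hμν
  refine ⟨(a + p - ν) / (p * (μ - ν)), (a + p - μ) / (p * (ν - μ)), ?_⟩
  ext v
  simp only [Pi.add_apply, Pi.smul_apply, smul_eq_mul, Pi.one_apply]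
  split_ifs <;> field_simp <;> ring

namespace Matrix.IsSymm

variable {n R : Type*} [Fintype n] {A : Matrix n n R}

theorem mulVec_dotProduct [CommSemiring R] (hA : A.IsSymm) (x y : n → R) :
    A *ᵥ x ⬝ᵥ y = x ⬝ᵥ A *ᵥ y := by
  rw [dotProduct_mulVec, ← mulVec_transpose, hA.eq]

theorem eigenvalue_eq_of_dotProduct_ne_zero [CommRing R] [IsDomain R] (hA : A.IsSymm)
    {x y : n → R} {μ ν : R} (hx : A *ᵥ x = μ • x) (hy : A *ᵥ y = ν • y) (hxy : x ⬝ᵥ y ≠ 0) :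
    μ = ν := by
  have h := hA.mulVec_dotProduct x y
  rw [hx, hy, smul_dotProduct, dotProduct_smul, smul_eq_mul, smul_eq_mul] at h
  exact mul_right_cancel₀ hxy h

variable [Field R] [LinearOrder R] [IsStrictOrderedRing R]

theorem dotProduct_one_ne_zero (hA : A.IsSymm) {x y : n → R} {μ ν α β : R}
    (hx : A *ᵥ x = μ • x) (hy : A *ᵥ y = ν • y) (hμν : μ ≠ ν) (hone : α • x + β • y = 1)
    (hnreg : ∀ c : R, A *ᵥ 1 ≠ c • 1) : x ⬝ᵥ 1 ≠ 0 := by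
  intro hx1
  have hxy : x ⬝ᵥ y = 0 := by
    by_contra h
    exact hμν (hA.eigenvalue_eq_of_dotProduct_ne_zero hx hy h)
  have hαx : α * (x ⬝ᵥ x) = 0 := by
    simpa [← hone, dotProduct_add, hxy] using hx1
  have hone' : β • y = 1 := by
    rcases mul_eq_zero.mp hαx with h | h
    · simpa [h] using hone
    · simpa [dotProduct_self_eq_zero.mp h] using hone
  apply hnreg ν
  rw [← hone', mulVec_smul, hy, smul_comm]

theorem setOf_main_eigenvalue_eq_pair (hA : A.IsSymm) {x y : n → R} {μ ν α β : R}
    (hx : A *ᵥ x = μ • x) (hy : A *ᵥ y = ν • y) (hμν : μ ≠ ν) (hone : α • x + β • y = 1)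
    (hnreg : ∀ c : R, A *ᵥ 1 ≠ c • 1) :
    {θ | ∃ z, z ≠ 0 ∧ A *ᵥ z = θ • z ∧ z ⬝ᵥ 1 ≠ 0} = {μ, ν} := by
  ext θ
  constructor
  · rintro ⟨z, -, hz, hz1⟩
    rw [← hone, dotProduct_add, dotProduct_smul, dotProduct_smul, smul_eq_mul, smul_eq_mul] at hz1
    by_cases hzx : z ⬝ᵥ x = 0
    · rw [hzx, mul_zero, zero_add] at hz1
      exact Or.inr (hA.eigenvalue_eq_of_dotProduct_ne_zero hz hy (right_ne_zero_of_mul hz1))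
    · exact Or.inl (hA.eigenvalue_eq_of_dotProduct_ne_zero hz hx hzx)
  · rintro (rfl | rfl)
    · have hx1 := hA.dotProduct_one_ne_zero hx hy hμν hone hnreg
      exact ⟨x, by rintro rfl; exact hx1 (zero_dotProduct _), hx, hx1⟩
    · have hy1 := hA.dotProduct_one_ne_zero hy hx hμν.symm (by rwa [add_comm]) hnreg
      exact ⟨y, by rintro rfl; exact hy1 (zero_dotProduct _), hy, hy1⟩

end Matrix.IsSymm

namespace SimpleGraph

theorem Connected.exists_adj_of_not {V : Type*} {G : SimpleGraph V} {P : V → Prop}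
    (hG : G.Connected) {u v : V} (hu : P u) (hv : ¬P v) : ∃ a b, G.Adj a b ∧ P a ∧ ¬P b := by
  obtain ⟨d, -, hd⟩ := (hG.preconnected u v).some.exists_boundary_dart {w | P w} hu hv
  exact ⟨d.fst, d.snd, d.adj, hd⟩

theorem adjMatrix_mulVec_one_ne_smul {V R : Type*} [Fintype V] {G : SimpleGraph V}
    [DecidableRel G.Adj] [NonAssocSemiring R] [CharZero R] {u v : V}
    (h : G.degree u ≠ G.degree v) (c : R) : G.adjMatrix R *ᵥ 1 ≠ c • 1 := by
  intro hc
  have hdeg (w : V) : (G.degree w : R) = c := by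
    simpa using (adjMatrix_mulVec_const_apply (a := (1 : R))).symm.trans (congrFun hc w)
  exact h (Nat.cast_injective ((hdeg u).trans (hdeg v).symm))

variable {V : Type*} [Fintype V] (G : SimpleGraph V) [DecidableRel G.Adj]

def IsEquitableWith (P : V → Prop) [DecidablePred P] (b₁₁ b₁₂ b₂₁ b₂₂ : ℕ) : Prop :=
  (∀ v, P v → ((G.neighborFinset v).filter P).card = b₁₁ ∧
    ((G.neighborFinset v).filter (¬P ·)).card = b₁₂) ∧
  (∀ v, ¬P v → ((G.neighborFinset v).filter P).card = b₂₁ ∧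
    ((G.neighborFinset v).filter (¬P ·)).card = b₂₂)

variable {G} {P : V → Prop} [DecidablePred P] {b₁₁ b₁₂ b₂₁ b₂₂ : ℕ}

theorem IsEquitableWith.adjMatrix_mulVec_ite {R : Type*} [NonAssocSemiring R]
    (hG : G.IsEquitableWith P b₁₁ b₁₂ b₂₁ b₂₂) (p q : R) :
    G.adjMatrix R *ᵥ (fun v => if P v then p else q) =
      fun v => if P v then b₁₁ * p + b₁₂ * q else b₂₁ * p + b₂₂ * q := by
  ext v
  rw [adjMatrix_mulVec_apply, Finset.sum_ite, Finset.sum_const, Finset.sum_const,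
    nsmul_eq_mul, nsmul_eq_mul]
  split_ifs with hv
  · rw [(hG.1 v hv).1, (hG.1 v hv).2]
  · rw [(hG.2 v hv).1, (hG.2 v hv).2]

theorem IsEquitableWith.pos_of_adj (hG : G.IsEquitableWith P b₁₁ b₁₂ b₂₁ b₂₂) {a b : V}
    (hab : G.Adj a b) (ha : P a) (hb : ¬P b) : 0 < b₁₂ ∧ 0 < b₂₁ := by
  rw [← (hG.1 a ha).2, ← (hG.2 b hb).1, Finset.card_pos, Finset.card_pos]
  exact ⟨⟨b, by simpa [hab]⟩, ⟨a, by simpa [hab.symm]⟩⟩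

/-- By `hμ`, `μ` is an eigenvalue of the quotient matrix, with eigenvector `(b₁₂, μ - b₁₁)`. -/
theorem IsEquitableWith.adjMatrix_mulVec_ite_eq_smul {R : Type*} [CommRing R]
    (hG : G.IsEquitableWith P b₁₁ b₁₂ b₂₁ b₂₂) {μ : R} (hμ : (μ - b₁₁) * (μ - b₂₂) = b₁₂ * b₂₁) :
    G.adjMatrix R *ᵥ (fun v => if P v then (b₁₂ : R) else μ - b₁₁) =
      μ • fun v => if P v then (b₁₂ : R) else μ - b₁₁ := by
  rw [hG.adjMatrix_mulVec_ite]
  ext v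
  simp only [Pi.smul_apply, smul_eq_mul]
  split_ifs
  · ring
  · linear_combination -hμ

end SimpleGraph

theorem stmt_5 {V : Type*} [Fintype V] [DecidableEq V]
    (G : SimpleGraph V) [DecidableRel G.Adj] (hG : G.Connected)
    (k₁ k₂ : ℕ) (hk : k₁ ≠ k₂)
    (hdeg : ∀ v : V, G.degree v = k₁ ∨ G.degree v = k₂)
    (h₁ : ∃ v : V, G.degree v = k₁) (h₂ : ∃ v : V, G.degree v = k₂)
    -- the valency partition is equitable:
    (b₁₁ b₁₂ b₂₁ b₂₂ : ℕ)
    (heq₁ : ∀ v : V, G.degree v = k₁ →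
      ((G.neighborFinset v).filter (fun w => G.degree w = k₁)).card = b₁₁ ∧
      ((G.neighborFinset v).filter (fun w => G.degree w = k₂)).card = b₁₂)
    (heq₂ : ∀ v : V, G.degree v = k₂ →
      ((G.neighborFinset v).filter (fun w => G.degree w = k₁)).card = b₂₁ ∧
      ((G.neighborFinset v).filter (fun w => G.degree w = k₂)).card = b₂₂) :
    {μ : ℝ | G.IsMainEigenvalue μ}.ncard = 2 := by
  obtain ⟨v₁, hv₁⟩ := h₁
  obtain ⟨v₂, hv₂⟩ := h₂
  have hk₂ : ∀ w, G.degree w = k₂ ↔ ¬G.degree w = k₁ := fun w => by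
    rcases hdeg w with h | h <;> simp [h, hk, hk.symm]
  have hequit : G.IsEquitableWith (G.degree · = k₁) b₁₁ b₁₂ b₂₁ b₂₂ := by
    simp only [hk₂] at heq₁ heq₂
    exact ⟨heq₁, heq₂⟩
  obtain ⟨a, b, hab, ha, hb⟩ :=
    hG.exists_adj_of_not (P := (G.degree · = k₁)) hv₁ ((hk₂ v₂).mp hv₂)
  obtain ⟨hb₁₂, hb₂₁⟩ := hequit.pos_of_adj hab ha hb
  obtain ⟨μ, ν, hμν, hμ, hν⟩ :=
    Real.exists_ne_sub_mul_sub_eq_of_pos (a := b₁₁) (d := b₂₂) (e := b₁₂ * b₂₁) (by positivity)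
  obtain ⟨α, β, hone⟩ := exists_smul_add_smul_ite_eq_one (G.degree · = k₁)
    (p := (b₁₂ : ℝ)) (a := b₁₁) (by positivity) hμν
  have hmain : {μ : ℝ | G.IsMainEigenvalue μ} = {μ, ν} :=
    G.isSymm_adjMatrix.setOf_main_eigenvalue_eq_pair (hequit.adjMatrix_mulVec_ite_eq_smul hμ)
      (hequit.adjMatrix_mulVec_ite_eq_smul hν) hμν hone
      (G.adjMatrix_mulVec_one_ne_smul (hv₁.trans_ne (hk.trans_eq hv₂.symm)))
  rw [hmain, Set.ncard_pair hμν]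
end

section
/- For integers α ≥ 0 and β with α² + 4β > 4, there exists a 2×2 matrix Q with non-negative integer entries, positive off-diagonal entries, trace α, determinant −β, and row sums satisfying q₁₁ + q₁₂ < q₂₁ + q₂₂. -/
theorem stmt_7 (α β : ℤ) (hα : 0 ≤ α) (h : α ^ 2 + 4 * β > 4) :
    ∃ q₁₁ q₁₂ q₂₁ q₂₂ : ℤ,
      0 ≤ q₁₁ ∧ 0 ≤ q₂₂ ∧ 0 < q₁₂ ∧ 0 < q₂₁ ∧
      q₁₁ + q₂₂ = α ∧ q₁₁ * q₂₂ - q₁₂ * q₂₁ = -β ∧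
      q₁₁ + q₁₂ < q₂₁ + q₂₂ := by
  rcases Int.even_or_odd α with ⟨k, hk⟩ | ⟨k, hk⟩
  · subst hk
    have hk0 : 0 ≤ k := by linarith
    have hq : 1 < k * k + β := by nlinarith
    exact ⟨k, 1, k * k + β, k, hk0, hk0, one_pos, by linarith, by ring, by ring, by linarith⟩
  · subst hk
    have hk0 : 0 ≤ k := by omega
    have hq : 0 < k * k + k + β := by nlinarith
    exact ⟨k, 1, k * (k + 1) + β, k + 1, hk0, by linarith, one_pos, by nlinarith, by ring,
      by ring, by nlinarith⟩
end

section
/- Let S be the Seidel matrix of a finite simple graph G on n ≥ 2 vertices. If G is regular of degree k and S has exactly two distinct eigenvalues, then G is strongly regular or complete or empty. -/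
/-!
Since the Seidel matrix `S` is symmetric with eigenvalues in `{r, s}`, it satisfies
`(S - r)(S - s) = 0`. For a `k`-regular graph the all-ones matrix `J` satisfies
`AJ = JA = kJ`, so expanding `S² = (J - I - 2A)²` turns this quadratic identity into
`A² = aJ + bI + cA`. The `(u, v)` entry of `A²` counts common neighbours, which is
therefore `a + c` for adjacent and `a` for distinct non-adjacent pairs. These conditions are
vacuous for complete and empty graphs, which thus satisfy the first alternative.
-/

open Matrix

/-- The Seidel matrix `S = J - I - 2A` of a graph. -/
def SimpleGraph.seidel {V : Type*} [Fintype V] [DecidableEq V]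
    (G : SimpleGraph V) [DecidableRel G.Adj] : Matrix V V ℝ :=
  Matrix.of (fun _ _ => (1 : ℝ)) - 1 - 2 • G.adjMatrix ℝ

theorem exists_nat_forall_eq_of_forall_cast_eq {ι α : Type*} [AddMonoidWithOne α] [CharZero α]
    {P : ι → Prop} (f : ι → ℕ) {c : α} (h : ∀ i, P i → (f i : α) = c) :
    ∃ m : ℕ, ∀ i, P i → f i = m := by
  by_cases hP : ∃ i, P i
  · obtain ⟨i, hi⟩ := hP
    exact ⟨f i, fun j hj => Nat.cast_injective ((h j hj).trans (h i hi).symm)⟩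
  · exact ⟨0, fun i hi => (hP ⟨i, hi⟩).elim⟩

namespace Matrix.IsHermitian

variable {𝕜 n : Type*} [RCLike 𝕜] [Fintype n] [DecidableEq n] {A : Matrix n n 𝕜}
  (hA : A.IsHermitian)
include hA

theorem exists_mulVec_eq_eigenvalues_smul (j : n) :
    ∃ x : n → 𝕜, x ≠ 0 ∧ A *ᵥ x = hA.eigenvalues j • x :=
  ⟨_, fun h => hA.eigenvectorBasis.orthonormal.ne_zero j (by simpa using h),
    hA.mulVec_eigenvectorBasis j⟩

theorem sub_smul_one_mul_sub_smul_one_eq_zero {r s : ℝ}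
    (h : ∀ i, hA.eigenvalues i = r ∨ hA.eigenvalues i = s) :
    (A - (r : 𝕜) • (1 : Matrix n n 𝕜)) * (A - (s : 𝕜) • (1 : Matrix n n 𝕜)) = 0 := by
  have hD : (diagonal (RCLike.ofReal ∘ hA.eigenvalues) - (r : 𝕜) • (1 : Matrix n n 𝕜)) *
      (diagonal (RCLike.ofReal ∘ hA.eigenvalues) - (s : 𝕜) • (1 : Matrix n n 𝕜)) = 0 := by
    rw [smul_one_eq_diagonal, smul_one_eq_diagonal, diagonal_sub, diagonal_sub,
      diagonal_mul_diagonal, diagonal_eq_zero]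
    ext i
    rcases h i with hi | hi <;> simp [hi]
  rw [hA.spectral_theorem]
  simpa only [map_mul, map_sub, map_smul, map_one, map_zero] using
    congrArg (Unitary.conjStarAlgAut 𝕜 _ hA.eigenvectorUnitary) hD

end Matrix.IsHermitian

namespace SimpleGraph

variable {V : Type*} [Fintype V] (G : SimpleGraph V) [DecidableRel G.Adj]

theorem adjMatrix_mul_self_apply {α : Type*} [Semiring α] [DecidableEq V] (u v : V) :
    (G.adjMatrix α * G.adjMatrix α) u v = Fintype.card (G.commonNeighbors u v) := by
  rw [← sq, adjMatrix_pow_apply_eq_card_walk,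
    @Fintype.card_congr _ _ (G.fintypeSetWalkLength u v 2) _
    (G.walkLengthTwoEquivCommonNeighbors u v)]

theorem isSymm_seidel [DecidableEq V] : G.seidel.IsSymm :=
  ((IsSymm.ext fun _ _ => rfl).sub isSymm_one).sub (G.isSymm_adjMatrix.smul 2)

variable {G}

theorem IsRegularOfDegree.adjMatrix_mul_const_one {α : Type*} [NonAssocSemiring α] {k : ℕ}
    (h : G.IsRegularOfDegree k) :
    G.adjMatrix α * of (fun _ _ => 1) = k • of (fun _ _ => (1 : α)) := by
  ext u v
  simp [adjMatrix_mul_apply, h u]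

theorem IsRegularOfDegree.const_one_mul_adjMatrix {α : Type*} [NonAssocSemiring α] {k : ℕ}
    (h : G.IsRegularOfDegree k) :
    of (fun _ _ => 1) * G.adjMatrix α = k • of (fun _ _ => (1 : α)) := by
  ext u v
  simp [mul_adjMatrix_apply, h v]

theorem IsRegularOfDegree.seidel_mul_self [DecidableEq V] {k : ℕ} (h : G.IsRegularOfDegree k) :
    G.seidel * G.seidel = ((Fintype.card V : ℝ) - 2 - 4 * k) • of (fun _ _ => 1) + 1
      + 4 • G.adjMatrix ℝ + 4 • (G.adjMatrix ℝ * G.adjMatrix ℝ) := by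
  have hJJ : (of fun _ _ => 1 : Matrix V V ℝ) * of (fun _ _ => 1) =
      Fintype.card V • of (fun _ _ => 1) := by
    ext
    simp [mul_apply]
  simp only [seidel, ← Nat.cast_smul_eq_nsmul ℝ] at hJJ ⊢
  simp only [sub_mul, mul_sub, smul_mul_assoc, mul_smul_comm, one_mul, mul_one, hJJ,
    h.adjMatrix_mul_const_one, h.const_one_mul_adjMatrix]
  module

theorem IsRegularOfDegree.exists_isSRGWith_of_adjMatrix_mul_self {α : Type*} [Ring α]
    [CharZero α] [DecidableEq V] {k : ℕ} (h : G.IsRegularOfDegree k) {a b c : α}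
    (hA : G.adjMatrix α * G.adjMatrix α = a • of (fun _ _ => 1) + b • 1 + c • G.adjMatrix α) :
    ∃ ℓ μ : ℕ, G.IsSRGWith (Fintype.card V) k ℓ μ := by
  have hentry (u v : V) (huv : u ≠ v) :
      (Fintype.card (G.commonNeighbors u v) : α) = a + c * if G.Adj u v then 1 else 0 := by
    simpa [G.adjMatrix_mul_self_apply, one_apply_ne huv] using congrFun (congrFun hA u) v
  obtain ⟨ℓ, hℓ⟩ := exists_nat_forall_eq_of_forall_cast_eq
    (P := fun p : V × V => G.Adj p.1 p.2) (fun p => Fintype.card (G.commonNeighbors p.1 p.2))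
    (c := a + c) fun p hp => by simpa [hp] using hentry p.1 p.2 hp.ne
  obtain ⟨μ, hμ⟩ := exists_nat_forall_eq_of_forall_cast_eq
    (P := fun p : V × V => p.1 ≠ p.2 ∧ ¬G.Adj p.1 p.2)
    (fun p => Fintype.card (G.commonNeighbors p.1 p.2))
    (c := a) fun p hp => by simpa [hp.2] using hentry p.1 p.2 hp.1
  exact ⟨ℓ, μ, rfl, h, fun u v huv => hℓ (u, v) huv, fun u v huv hnadj => hμ (u, v) ⟨huv, hnadj⟩⟩

end SimpleGraph

theorem stmt_9_general {V : Type*} [Fintype V] [DecidableEq V]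
    (G : SimpleGraph V) [DecidableRel G.Adj]
    (k : ℕ) (hreg : G.IsRegularOfDegree k)
    (htwo : {μ : ℝ | ∃ x : V → ℝ, x ≠ 0 ∧ G.seidel.mulVec x = μ • x}.ncard = 2) :
    (∃ l m : ℕ, G.IsSRGWith (Fintype.card V) k l m) ∨ G = ⊤ ∨ G = ⊥ := by
  have hS : G.seidel.IsHermitian := isHermitian_iff_isSymm.mpr G.isSymm_seidel
  obtain ⟨r, s, -, hrs⟩ := Set.ncard_eq_two.mp htwo
  have hev (i : V) : hS.eigenvalues i = r ∨ hS.eigenvalues i = s := by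
    have hmem : hS.eigenvalues i ∈ ({r, s} : Set ℝ) :=
      hrs ▸ hS.exists_mulVec_eq_eigenvalues_smul i
    simpa using hmem
  have hquad : G.seidel * G.seidel = (r + s) • G.seidel - (r * s) • 1 := by
    rw [← sub_eq_zero, ← hS.sub_smul_one_mul_sub_smul_one_eq_zero hev]
    simp only [RCLike.ofReal_real_eq_id, id, sub_mul, mul_sub, smul_mul_assoc, mul_smul_comm,
      one_mul, mul_one]
    module
  have hA2 : G.adjMatrix ℝ * G.adjMatrix ℝ =
      ((r + s - Fintype.card V + 2 + 4 * k) / 4) • of (fun _ _ => 1)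
        + (-(r * s + r + s + 1) / 4) • 1 + (-(r + s + 2) / 2) • G.adjMatrix ℝ := by
    have hsq := hreg.seidel_mul_self
    rw [hquad, SimpleGraph.seidel] at hsq
    linear_combination (norm := module) (-(1 / 4) : ℝ) • hsq
  exact Or.inl (hreg.exists_isSRGWith_of_adjMatrix_mul_self hA2)

theorem stmt_9 {V : Type*} [Fintype V] [DecidableEq V]
    (G : SimpleGraph V) [DecidableRel G.Adj]
    (hn : 2 ≤ Fintype.card V) (k : ℕ) (hreg : G.IsRegularOfDegree k)
    (htwo : {μ : ℝ | ∃ x : V → ℝ, x ≠ 0 ∧ G.seidel.mulVec x = μ • x}.ncard = 2) :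
    (∃ l m : ℕ, G.IsSRGWith (Fintype.card V) k l m) ∨ G = ⊤ ∨ G = ⊥ :=
  stmt_9_general G k hreg htwo
end

section
/- Let G and H be disjoint finite simple graphs, both 2-walk (α,β)-linear for the same α, β, with edges e = xy in G and f = uv in H such that deg_G(x) = deg_H(u) and deg_G(y) = deg_H(v). Let L be the graph on V(G) ∪ V(H) obtained from the disjoint union by deleting edges xy and uv and adding edges xv and yu. Then L is 2-walk (α,β)-linear (the degree vector d_L of L satisfies A_L d_L = α d_L + β j). -/
open Matrix

/-- The graph obtained from the disjoint union of `G` and `H` by deleting the edges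
`xy` and `uv` and adding the edges `xv` and `yu`. -/
def swapGraph {V W : Type*} (G : SimpleGraph V) (H : SimpleGraph W)
    (x y : V) (u v : W) : SimpleGraph (V ⊕ W) where
  Adj a b := match a, b with
    | Sum.inl a, Sum.inl b => G.Adj a b ∧ ¬((a = x ∧ b = y) ∨ (a = y ∧ b = x))
    | Sum.inr a, Sum.inr b => H.Adj a b ∧ ¬((a = u ∧ b = v) ∨ (a = v ∧ b = u))
    | Sum.inl a, Sum.inr b => (a = x ∧ b = v) ∨ (a = y ∧ b = u)
    | Sum.inr b, Sum.inl a => (a = x ∧ b = v) ∨ (a = y ∧ b = u)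
  symm := by
    constructor
    rintro (a | a) (b | b) h
    · exact ⟨G.adj_symm h.1, fun hc => h.2 (by tauto)⟩
    · exact h
    · exact h
    · exact ⟨H.adj_symm h.1, fun hc => h.2 (by tauto)⟩
  loopless := by
    constructor
    rintro (a | a) h
    · exact G.irrefl h.1
    · exact H.irrefl h.1

/-!
The swap keeps every degree. In the row of `x` it trades the summand of the lost neighbour `y`
for that of the new neighbour `v`, and similarly in the rows of `y`, `u`, `v`; so the adjacency
operator of the swapped graph acts blockwise like those of `G` and `H` on every vector taking
equal values at `x`, `u` and at `y`, `v`. The degree vector is such a vector, since `x`, `u` and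
`y`, `v` have equal degrees, so the linear relations of `G` and `H` transfer to the swapped graph.
-/

theorem Finset.sum_ite_or_of_ne {ι κ R : Type*} [Fintype κ] [DecidableEq ι] [DecidableEq κ]
    [AddCommMonoid R] {p r : ι} (hpr : p ≠ r) (a : ι) (q s : κ) (f : κ → R) :
    ∑ b, (if (a = p ∧ b = q) ∨ (a = r ∧ b = s) then f b else 0) =
      (if a = p then f q else 0) + (if a = r then f s else 0) := by
  have hsplit : ∀ b, (if (a = p ∧ b = q) ∨ (a = r ∧ b = s) then f b else 0) =
      (if a = p ∧ b = q then f b else 0) + (if a = r ∧ b = s then f b else 0) := by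
    intro b
    by_cases hp : a = p ∧ b = q
    · have hr : ¬(a = r ∧ b = s) := fun hr => hpr (hp.1.symm.trans hr.1)
      rw [if_pos (Or.inl hp), if_pos hp, if_neg hr, add_zero]
    · simp only [hp, false_or, if_false, zero_add]
  simp only [hsplit, Finset.sum_add_distrib, ite_and, Finset.sum_ite_irrel, Finset.sum_const_zero,
    Finset.sum_ite_eq', Finset.mem_univ, if_true]

theorem Finset.sum_ite_and_not {κ R : Type*} [Fintype κ] [AddCommGroup R] (P E : κ → Prop)
    [DecidablePred P] [DecidablePred E] (hEP : ∀ b, E b → P b) (f : κ → R) :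
    ∑ b, (if P b ∧ ¬E b then f b else 0) =
      ∑ b, (if P b then f b else 0) - ∑ b, (if E b then f b else 0) := by
  rw [eq_sub_iff_add_eq, ← Finset.sum_add_distrib]
  refine Finset.sum_congr rfl fun b _ => ?_
  by_cases hE : E b <;> simp [hE, hEP b]

theorem SimpleGraph.adjMatrix_mulVec_apply_eq_sum_ite {V R : Type*} [Fintype V]
    [NonAssocSemiring R] (G : SimpleGraph V) [DecidableRel G.Adj] (w : V → R) (i : V) :
    (G.adjMatrix R *ᵥ w) i = ∑ j, if G.Adj i j then w j else 0 := by
  simp only [mulVec, dotProduct, adjMatrix_apply, ite_mul, one_mul, zero_mul]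

section SwapGraph

variable {V W : Type*} {G : SimpleGraph V} {H : SimpleGraph W} {x y : V} {u v : W}

theorem swapGraph_adj_inl_inl {a a' : V} :
    (swapGraph G H x y u v).Adj (Sum.inl a) (Sum.inl a') ↔
      G.Adj a a' ∧ ¬((a = x ∧ a' = y) ∨ (a = y ∧ a' = x)) := Iff.rfl

theorem swapGraph_adj_inr_inr {b b' : W} :
    (swapGraph G H x y u v).Adj (Sum.inr b) (Sum.inr b') ↔
      H.Adj b b' ∧ ¬((b = u ∧ b' = v) ∨ (b = v ∧ b' = u)) := Iff.rfl

theorem swapGraph_adj_inl_inr {a : V} {b : W} :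
    (swapGraph G H x y u v).Adj (Sum.inl a) (Sum.inr b) ↔ (a = x ∧ b = v) ∨ (a = y ∧ b = u) :=
  Iff.rfl

theorem swapGraph_adj_inr_inl {a : V} {b : W} :
    (swapGraph G H x y u v).Adj (Sum.inr b) (Sum.inl a) ↔ (b = v ∧ a = x) ∨ (b = u ∧ a = y) := by
  rw [SimpleGraph.adj_comm, swapGraph_adj_inl_inr]
  exact or_congr and_comm and_comm

variable {R : Type*} [NonAssocRing R] [Fintype V] [DecidableEq V] [Fintype W] [DecidableEq W]
  [DecidableRel (swapGraph G H x y u v).Adj] (w : V ⊕ W → R)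

theorem swapGraph_adjMatrix_mulVec_inl [DecidableRel G.Adj] (hxy : G.Adj x y)
    (hwu : w (Sum.inr u) = w (Sum.inl x)) (hwv : w (Sum.inr v) = w (Sum.inl y)) (a : V) :
    ((swapGraph G H x y u v).adjMatrix R *ᵥ w) (Sum.inl a) =
      (G.adjMatrix R *ᵥ (w ∘ Sum.inl)) a := by
  have hdel : ∀ b, (a = x ∧ b = y) ∨ (a = y ∧ b = x) → G.Adj a b := by
    rintro b (⟨rfl, rfl⟩ | ⟨rfl, rfl⟩)
    exacts [hxy, hxy.symm]
  rw [SimpleGraph.adjMatrix_mulVec_apply_eq_sum_ite, SimpleGraph.adjMatrix_mulVec_apply_eq_sum_ite,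
    Fintype.sum_sum_type]
  simp only [swapGraph_adj_inl_inl, swapGraph_adj_inl_inr]
  rw [Finset.sum_ite_and_not _ _ hdel, Finset.sum_ite_or_of_ne hxy.ne,
    Finset.sum_ite_or_of_ne hxy.ne, hwu, hwv]
  simp only [Function.comp_apply]
  abel

theorem swapGraph_adjMatrix_mulVec_inr [DecidableRel H.Adj] (huv : H.Adj u v)
    (hwu : w (Sum.inr u) = w (Sum.inl x)) (hwv : w (Sum.inr v) = w (Sum.inl y)) (b : W) :
    ((swapGraph G H x y u v).adjMatrix R *ᵥ w) (Sum.inr b) =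
      (H.adjMatrix R *ᵥ (w ∘ Sum.inr)) b := by
  have hdel : ∀ b', (b = u ∧ b' = v) ∨ (b = v ∧ b' = u) → H.Adj b b' := by
    rintro b' (⟨rfl, rfl⟩ | ⟨rfl, rfl⟩)
    exacts [huv, huv.symm]
  rw [SimpleGraph.adjMatrix_mulVec_apply_eq_sum_ite, SimpleGraph.adjMatrix_mulVec_apply_eq_sum_ite,
    Fintype.sum_sum_type]
  simp only [swapGraph_adj_inr_inl, swapGraph_adj_inr_inr]
  rw [Finset.sum_ite_and_not _ _ hdel, Finset.sum_ite_or_of_ne huv.ne.symm,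
    Finset.sum_ite_or_of_ne huv.ne, ← hwu, ← hwv]
  simp only [Function.comp_apply]
  abel

theorem swapGraph_adjMatrix_mulVec [DecidableRel G.Adj] [DecidableRel H.Adj] (hxy : G.Adj x y)
    (huv : H.Adj u v) (hwu : w (Sum.inr u) = w (Sum.inl x))
    (hwv : w (Sum.inr v) = w (Sum.inl y)) :
    (swapGraph G H x y u v).adjMatrix R *ᵥ w =
      Sum.elim (G.adjMatrix R *ᵥ (w ∘ Sum.inl)) (H.adjMatrix R *ᵥ (w ∘ Sum.inr)) := by
  ext (a | b)
  exacts [swapGraph_adjMatrix_mulVec_inl w hxy hwu hwv a,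
    swapGraph_adjMatrix_mulVec_inr w huv hwu hwv b]

end SwapGraph

theorem stmt_13_general {V W : Type*} [Fintype V] [DecidableEq V] [Fintype W] [DecidableEq W]
    (G : SimpleGraph V) (H : SimpleGraph W) [DecidableRel G.Adj] [DecidableRel H.Adj]
    (α β : ℝ)
    (hGlin : (G.adjMatrix ℝ).mulVec ((G.adjMatrix ℝ).mulVec (fun _ => (1 : ℝ))) =
      α • (G.adjMatrix ℝ).mulVec (fun _ => (1 : ℝ)) + β • (fun _ => (1 : ℝ)))
    (hHlin : (H.adjMatrix ℝ).mulVec ((H.adjMatrix ℝ).mulVec (fun _ => (1 : ℝ))) =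
      α • (H.adjMatrix ℝ).mulVec (fun _ => (1 : ℝ)) + β • (fun _ => (1 : ℝ)))
    (x y : V) (u v : W) (hxy : G.Adj x y) (huv : H.Adj u v)
    (hdx : G.degree x = H.degree u) (hdy : G.degree y = H.degree v)
    [DecidableRel (swapGraph G H x y u v).Adj] :
    ((swapGraph G H x y u v).adjMatrix ℝ).mulVec
        (((swapGraph G H x y u v).adjMatrix ℝ).mulVec (fun _ => (1 : ℝ))) =
      α • ((swapGraph G H x y u v).adjMatrix ℝ).mulVec (fun _ => (1 : ℝ)) +
        β • (fun _ => (1 : ℝ)) := by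
  set d := (swapGraph G H x y u v).adjMatrix ℝ *ᵥ fun _ => (1 : ℝ)
  have hd : d = Sum.elim (G.adjMatrix ℝ *ᵥ fun _ => 1) (H.adjMatrix ℝ *ᵥ fun _ => 1) :=
    swapGraph_adjMatrix_mulVec _ hxy huv rfl rfl
  have hdu : d (Sum.inr u) = d (Sum.inl x) := by simp [hd, hdx]
  have hdv : d (Sum.inr v) = d (Sum.inl y) := by simp [hd, hdy]
  rw [swapGraph_adjMatrix_mulVec d hxy huv hdu hdv, hd]
  ext (a | b)
  exacts [congrFun hGlin a, congrFun hHlin b]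

theorem stmt_13 {V W : Type*} [Fintype V] [DecidableEq V] [Fintype W] [DecidableEq W]
    (G : SimpleGraph V) (H : SimpleGraph W) [DecidableRel G.Adj] [DecidableRel H.Adj]
    (α β : ℝ)
    (hGnonreg : ¬ ∃ k : ℕ, G.IsRegularOfDegree k)
    (hHnonreg : ¬ ∃ k : ℕ, H.IsRegularOfDegree k)
    (hGlin : (G.adjMatrix ℝ).mulVec ((G.adjMatrix ℝ).mulVec (fun _ => (1 : ℝ))) =
      α • (G.adjMatrix ℝ).mulVec (fun _ => (1 : ℝ)) + β • (fun _ => (1 : ℝ)))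
    (hHlin : (H.adjMatrix ℝ).mulVec ((H.adjMatrix ℝ).mulVec (fun _ => (1 : ℝ))) =
      α • (H.adjMatrix ℝ).mulVec (fun _ => (1 : ℝ)) + β • (fun _ => (1 : ℝ)))
    (x y : V) (u v : W) (hxy : G.Adj x y) (huv : H.Adj u v)
    (hdx : G.degree x = H.degree u) (hdy : G.degree y = H.degree v)
    [DecidableRel (swapGraph G H x y u v).Adj] :
    ((swapGraph G H x y u v).adjMatrix ℝ).mulVec
        (((swapGraph G H x y u v).adjMatrix ℝ).mulVec (fun _ => (1 : ℝ))) =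
      α • ((swapGraph G H x y u v).adjMatrix ℝ).mulVec (fun _ => (1 : ℝ)) +
        β • (fun _ => (1 : ℝ)) :=
  stmt_13_general G H α β hGlin hHlin x y u v hxy huv hdx hdy
end

section
/- Let G be a δ-harmonic graph with an edge e = xy such that G − e is connected. Construct L from two disjoint copies G₁, G₂ of G with corresponding edges x₁y₁ and x₂y₂ by deleting those edges and adding edges x₁y₂ and x₂y₁. Then L is a connected δ-harmonic graph on twice as many vertices. -/
/-!
Both copies of `G − xy` sit inside `L`, and the crossing edge `x₁y₂` joins them, so `L` is
connected. For the harmonicity, a vertex `v₁` of the first copy is adjacent in `L` to exactly one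
of `u₁`, `u₂` when `G.Adj v u`, and to neither otherwise (the crossing edges replace the deleted
ones). Hence the adjacency matrix of `L` maps a function `g ⊕ g` that agrees on the two copies to
`Ag ⊕ Ag`. Since the degree vector of `L` is `d ⊕ d`, the identity `Ad = δd` lifts to `L`.
-/

open Matrix SimpleGraph

/-- Two copies of `G` with the copies of the edge `xy` deleted and replaced by the two
"crossing" edges `x₁y₂`, `x₂y₁`. -/
def doubleSwapGraph {V : Type*} (G : SimpleGraph V) (x y : V) : SimpleGraph (V ⊕ V) where
  Adj a b := match a, b with
    | Sum.inl a, Sum.inl b => G.Adj a b ∧ ¬((a = x ∧ b = y) ∨ (a = y ∧ b = x))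
    | Sum.inr a, Sum.inr b => G.Adj a b ∧ ¬((a = x ∧ b = y) ∨ (a = y ∧ b = x))
    | Sum.inl a, Sum.inr b => (a = x ∧ b = y) ∨ (a = y ∧ b = x)
    | Sum.inr b, Sum.inl a => (a = x ∧ b = y) ∨ (a = y ∧ b = x)
  symm := by
    constructor
    rintro (a | a) (b | b) h
    · exact ⟨h.1.symm, fun hc => h.2 (by tauto)⟩
    · exact by tauto
    · exact by tauto
    · exact ⟨h.1.symm, fun hc => h.2 (by tauto)⟩
  loopless := by
    constructor
    rintro (a | a) h
    · exact G.irrefl h.1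
    · exact G.irrefl h.1

namespace doubleSwapGraph

variable {V : Type*} {G : SimpleGraph V} {x y : V}

lemma adj_inl_inl_iff {a b : V} :
    (doubleSwapGraph G x y).Adj (.inl a) (.inl b) ↔ (G.deleteEdges {s(x, y)}).Adj a b := by
  simp [doubleSwapGraph, deleteEdges_adj]

lemma adj_inr_inr_iff {a b : V} :
    (doubleSwapGraph G x y).Adj (.inr a) (.inr b) ↔ (G.deleteEdges {s(x, y)}).Adj a b := by
  simp [doubleSwapGraph, deleteEdges_adj]

def inlHom : G.deleteEdges {s(x, y)} →g doubleSwapGraph G x y where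
  toFun := Sum.inl
  map_rel' := adj_inl_inl_iff.mpr

def inrHom : G.deleteEdges {s(x, y)} →g doubleSwapGraph G x y where
  toFun := Sum.inr
  map_rel' := adj_inr_inr_iff.mpr

theorem connected (hconn : (G.deleteEdges {s(x, y)}).Connected) :
    (doubleSwapGraph G x y).Connected := by
  have reach_inl (a b : V) : (doubleSwapGraph G x y).Reachable (.inl a) (.inl b) :=
    (hconn.preconnected a b).map inlHom
  have reach_inr (a b : V) : (doubleSwapGraph G x y).Reachable (.inr a) (.inr b) :=
    (hconn.preconnected a b).map inrHom
  have cross : (doubleSwapGraph G x y).Adj (.inl x) (.inr y) := Or.inl ⟨rfl, rfl⟩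
  have reach_inl_inr (a b : V) : (doubleSwapGraph G x y).Reachable (.inl a) (.inr b) :=
    ((reach_inl a x).trans cross.reachable).trans (reach_inr y b)
  have : Nonempty (V ⊕ V) := ⟨.inl x⟩
  refine Connected.mk ?_
  rintro (a | a) (b | b)
  · exact reach_inl a b
  · exact reach_inl_inr a b
  · exact (reach_inl_inr b a).symm
  · exact reach_inr a b

variable {R : Type*} [NonAssocSemiring R] [DecidableRel G.Adj]
  [DecidableRel (doubleSwapGraph G x y).Adj]

lemma adjMatrix_inl_inl_add_inl_inr (hxy : G.Adj x y) (v u : V) :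
    (doubleSwapGraph G x y).adjMatrix R (.inl v) (.inl u) +
      (doubleSwapGraph G x y).adjMatrix R (.inl v) (.inr u) = G.adjMatrix R v u := by
  by_cases hvu : (v = x ∧ u = y) ∨ (v = y ∧ u = x)
  · have hG : G.Adj v u := by
      rcases hvu with ⟨rfl, rfl⟩ | ⟨rfl, rfl⟩
      exacts [hxy, hxy.symm]
    have hll : ¬(doubleSwapGraph G x y).Adj (.inl v) (.inl u) := fun h => h.2 hvu
    have hlr : (doubleSwapGraph G x y).Adj (.inl v) (.inr u) := hvu
    simp only [adjMatrix_apply, hll, hlr, hG, if_true, if_false, zero_add]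
  · have hll : (doubleSwapGraph G x y).Adj (.inl v) (.inl u) ↔ G.Adj v u := and_iff_left hvu
    have hlr : ¬(doubleSwapGraph G x y).Adj (.inl v) (.inr u) := hvu
    simp only [adjMatrix_apply, hll, hlr, if_false, add_zero]

lemma adjMatrix_inr_inl_add_inr_inr (hxy : G.Adj x y) (v u : V) :
    (doubleSwapGraph G x y).adjMatrix R (.inr v) (.inl u) +
      (doubleSwapGraph G x y).adjMatrix R (.inr v) (.inr u) = G.adjMatrix R v u := by
  by_cases hvu : (v = x ∧ u = y) ∨ (v = y ∧ u = x)
  · have hG : G.Adj v u := by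
      rcases hvu with ⟨rfl, rfl⟩ | ⟨rfl, rfl⟩
      exacts [hxy, hxy.symm]
    have hrl : (doubleSwapGraph G x y).Adj (.inr v) (.inl u) :=
      show (u = x ∧ v = y) ∨ (u = y ∧ v = x) by tauto
    have hrr : ¬(doubleSwapGraph G x y).Adj (.inr v) (.inr u) := fun h => h.2 hvu
    simp only [adjMatrix_apply, hrl, hrr, hG, if_true, if_false, add_zero]
  · have hrl : ¬(doubleSwapGraph G x y).Adj (.inr v) (.inl u) :=
      show ¬((u = x ∧ v = y) ∨ (u = y ∧ v = x)) by tauto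
    have hrr : (doubleSwapGraph G x y).Adj (.inr v) (.inr u) ↔ G.Adj v u := and_iff_left hvu
    simp only [adjMatrix_apply, hrl, hrr, if_false, zero_add]

variable [Fintype V]

theorem adjMatrix_mulVec_elim_self (hxy : G.Adj x y) (g : V → R) :
    (doubleSwapGraph G x y).adjMatrix R *ᵥ Sum.elim g g =
      Sum.elim (G.adjMatrix R *ᵥ g) (G.adjMatrix R *ᵥ g) := by
  funext a
  rcases a with v | v
  · simp only [mulVec, dotProduct, Fintype.sum_sum_type, Sum.elim_inl, Sum.elim_inr,
      ← Finset.sum_add_distrib, ← add_mul, adjMatrix_inl_inl_add_inl_inr hxy]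
  · simp only [mulVec, dotProduct, Fintype.sum_sum_type, Sum.elim_inl, Sum.elim_inr,
      ← Finset.sum_add_distrib, ← add_mul, adjMatrix_inr_inl_add_inr_inr hxy]

theorem adjMatrix_mulVec_mulVec_one_eq_smul (hxy : G.Adj x y) (c : R)
    (hharm : G.adjMatrix R *ᵥ (G.adjMatrix R *ᵥ fun _ => 1) = c • G.adjMatrix R *ᵥ fun _ => 1) :
    (doubleSwapGraph G x y).adjMatrix R *ᵥ ((doubleSwapGraph G x y).adjMatrix R *ᵥ fun _ => 1) =
      c • (doubleSwapGraph G x y).adjMatrix R *ᵥ fun _ => 1 := by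
  have hdeg : (doubleSwapGraph G x y).adjMatrix R *ᵥ (fun _ => 1) =
      Sum.elim (G.adjMatrix R *ᵥ fun _ => 1) (G.adjMatrix R *ᵥ fun _ => 1) := by
    rw [← adjMatrix_mulVec_elim_self hxy, Sum.elim_lam_const_lam_const]
  rw [hdeg, adjMatrix_mulVec_elim_self hxy, hharm]
  funext a
  rcases a with v | v <;> rfl

end doubleSwapGraph

theorem stmt_14_general {V : Type*} [Fintype V]
    (G : SimpleGraph V) [DecidableRel G.Adj] (δ : ℕ)
    (hharm : (G.adjMatrix ℝ).mulVec ((G.adjMatrix ℝ).mulVec (fun _ => (1 : ℝ))) =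
      (δ : ℝ) • (G.adjMatrix ℝ).mulVec (fun _ => (1 : ℝ)))
    (x y : V) (hxy : G.Adj x y)
    (hconn : (G.deleteEdges {s(x, y)}).Connected)
    [DecidableRel (doubleSwapGraph G x y).Adj] :
    (doubleSwapGraph G x y).Connected ∧
    ((doubleSwapGraph G x y).adjMatrix ℝ).mulVec
        (((doubleSwapGraph G x y).adjMatrix ℝ).mulVec (fun _ => (1 : ℝ))) =
      (δ : ℝ) • ((doubleSwapGraph G x y).adjMatrix ℝ).mulVec (fun _ => (1 : ℝ)) ∧
    Fintype.card (V ⊕ V) = 2 * Fintype.card V :=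
  ⟨doubleSwapGraph.connected hconn,
    doubleSwapGraph.adjMatrix_mulVec_mulVec_one_eq_smul hxy _ hharm,
    by rw [Fintype.card_sum, two_mul]⟩

theorem stmt_14 {V : Type*} [Fintype V] [DecidableEq V]
    (G : SimpleGraph V) [DecidableRel G.Adj] (δ : ℕ)
    (hharm : (G.adjMatrix ℝ).mulVec ((G.adjMatrix ℝ).mulVec (fun _ => (1 : ℝ))) =
      (δ : ℝ) • (G.adjMatrix ℝ).mulVec (fun _ => (1 : ℝ)))
    (x y : V) (hxy : G.Adj x y)
    (hconn : (G.deleteEdges {s(x, y)}).Connected)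
    [DecidableRel (doubleSwapGraph G x y).Adj] :
    (doubleSwapGraph G x y).Connected ∧
    ((doubleSwapGraph G x y).adjMatrix ℝ).mulVec
        (((doubleSwapGraph G x y).adjMatrix ℝ).mulVec (fun _ => (1 : ℝ))) =
      (δ : ℝ) • ((doubleSwapGraph G x y).adjMatrix ℝ).mulVec (fun _ => (1 : ℝ)) ∧
    Fintype.card (V ⊕ V) = 2 * Fintype.card V :=
  stmt_14_general G δ hharm x y hxy hconn
end

section
/- For every integer λ ≥ 2, the tree T_λ (one central vertex of degree λ² − λ + 1, its neighbours of degree λ, all remaining vertices leaves) is λ-harmonic: its adjacency matrix A and degree vector d satisfy Ad = λd. -/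
/-!
Since `A 1 = d`, the identity `A d = λ d` says that at every vertex the degrees of the
neighbours add up to `λ` times its own degree. In `T_λ` the centre has `λ² - λ + 1`
neighbours, each of degree `λ`; a middle vertex sees the centre and `λ - 1` leaves, giving
`(λ² - λ + 1) + (λ - 1) = λ · λ`; a leaf sees a single vertex of degree `λ`.
-/

open Matrix

/-- Vertex set of the harmonic tree `T_λ`: a center, `λ² - λ + 1` middle vertices,
and `λ - 1` leaves attached to each middle vertex. -/
abbrev TlamV (l : ℕ) : Type :=
  Unit ⊕ Fin (l ^ 2 - l + 1) ⊕ (Fin (l ^ 2 - l + 1) × Fin (l - 1))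

/-- The harmonic tree `T_λ`: the center is adjacent to every middle vertex, and each
middle vertex `i` is adjacent to its `λ - 1` private leaves. -/
def Tlam (l : ℕ) : SimpleGraph (TlamV l) :=
  SimpleGraph.fromRel (fun a b =>
    match a, b with
    | Sum.inl _, Sum.inr (Sum.inl _) => True
    | Sum.inr (Sum.inl i), Sum.inr (Sum.inr p) => p.1 = i
    | _, _ => False)

namespace SimpleGraph

variable {V α : Type*} [Fintype V] [NonAssocSemiring α]

theorem adjMatrix_mulVec_degree_eq_smul (G : SimpleGraph V) [DecidableRel G.Adj] (c : ℕ)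
    (h : ∀ v, ∑ u ∈ G.neighborFinset v, G.degree u = c * G.degree v) :
    G.adjMatrix α *ᵥ (G.adjMatrix α *ᵥ fun _ => 1) = (c : α) • G.adjMatrix α *ᵥ fun _ => 1 := by
  ext v
  simpa using congrArg (Nat.cast : ℕ → α) (h v)

end SimpleGraph

namespace Tlam

open Finset

variable {l : ℕ} [DecidableRel (Tlam l).Adj] {M : Type*} [AddCommMonoid M] (f : TlamV l → M)

theorem sum_neighborFinset_center (u : Unit) :
    ∑ v ∈ (Tlam l).neighborFinset (.inl u), f v = ∑ i, f (.inr (.inl i)) := by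
  rw [SimpleGraph.neighborFinset_eq_filter, sum_filter]
  simp [Fintype.sum_sum_type, Tlam]

theorem sum_neighborFinset_middle (i : Fin (l ^ 2 - l + 1)) :
    ∑ v ∈ (Tlam l).neighborFinset (.inr (.inl i)), f v =
      f (.inl ()) + ∑ j, f (.inr (.inr (i, j))) := by
  rw [SimpleGraph.neighborFinset_eq_filter, sum_filter]
  simp [Fintype.sum_sum_type, Fintype.sum_prod_type_right, Tlam]

theorem sum_neighborFinset_leaf (p : Fin (l ^ 2 - l + 1) × Fin (l - 1)) :
    ∑ v ∈ (Tlam l).neighborFinset (.inr (.inr p)), f v = f (.inr (.inl p.1)) := by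
  rw [SimpleGraph.neighborFinset_eq_filter, sum_filter]
  simp [Fintype.sum_sum_type, Tlam]

theorem degree_center (u : Unit) : (Tlam l).degree (.inl u) = l ^ 2 - l + 1 := by
  rw [← SimpleGraph.card_neighborFinset_eq_degree, card_eq_sum_ones, sum_neighborFinset_center]
  simp

theorem degree_middle (hl : 1 ≤ l) (i : Fin (l ^ 2 - l + 1)) :
    (Tlam l).degree (.inr (.inl i)) = l := by
  rw [← SimpleGraph.card_neighborFinset_eq_degree, card_eq_sum_ones, sum_neighborFinset_middle]
  simp only [sum_const, card_univ, Fintype.card_fin, smul_eq_mul, mul_one]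
  omega

theorem degree_leaf (p : Fin (l ^ 2 - l + 1) × Fin (l - 1)) :
    (Tlam l).degree (.inr (.inr p)) = 1 := by
  rw [← SimpleGraph.card_neighborFinset_eq_degree, card_eq_sum_ones, sum_neighborFinset_leaf]

theorem sum_degree_neighborFinset (hl : 1 ≤ l) (v : TlamV l) :
    ∑ u ∈ (Tlam l).neighborFinset v, (Tlam l).degree u = l * (Tlam l).degree v := by
  rcases v with u | i | p
  · simp [sum_neighborFinset_center, degree_center, degree_middle hl, mul_comm]
  · have hsq : l ≤ l ^ 2 := Nat.le_self_pow two_ne_zero l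
    simp only [sum_neighborFinset_middle, degree_center, degree_middle hl, degree_leaf,
      sum_const, card_univ, Fintype.card_fin, smul_eq_mul, mul_one, ← sq]
    omega
  · simp [sum_neighborFinset_leaf, degree_middle hl, degree_leaf]

end Tlam

theorem stmt_16 (l : ℕ) (hl : 2 ≤ l) [DecidableRel (Tlam l).Adj] :
    ((Tlam l).adjMatrix ℝ).mulVec (((Tlam l).adjMatrix ℝ).mulVec (fun _ => (1 : ℝ))) =
      (l : ℝ) • ((Tlam l).adjMatrix ℝ).mulVec (fun _ => (1 : ℝ)) :=
  (Tlam l).adjMatrix_mulVec_degree_eq_smul l (Tlam.sum_degree_neighborFinset (by omega))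
end

section
/- If a finite simple graph G contains an isolated vertex and lies in the switching class of a graph H, and G and H have the same number of edges, and the Seidel matrix of G has exactly two distinct eigenvalues, then H is harmonic: its adjacency matrix A_H and degree vector d_H satisfy A_H d_H = δ d_H for some δ ≥ 0. -/
open Matrix

lemma quad_of_two_eigs {n : Type*} [Fintype n] [DecidableEq n] (A : Matrix n n ℝ)
    (hA : A.IsHermitian) (μ1 μ2 : ℝ)
    (hset : {μ : ℝ | ∃ x : n → ℝ, x ≠ 0 ∧ A.mulVec x = μ • x} = {μ1, μ2}) :
    (A - μ1 • 1) * (A - μ2 • 1) = 0 := by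
  have key : ∀ i, hA.eigenvalues i = μ1 ∨ hA.eigenvalues i = μ2 := by
    intro i
    have hmem : hA.eigenvalues i ∈ {μ : ℝ | ∃ x : n → ℝ, x ≠ 0 ∧ A.mulVec x = μ • x} := by
      refine ⟨⇑(hA.eigenvectorBasis i), ?_, hA.mulVec_eigenvectorBasis i⟩
      intro h
      exact hA.eigenvectorBasis.toBasis.ne_zero i (by ext j; exact congrFun h j)
    rw [hset] at hmem
    exact hmem
  set U : Matrix n n ℝ := ↑hA.eigenvectorUnitary with hUdef
  have h1 : star U * U = 1 := hA.eigenvectorUnitary.prop.1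
  have h2 : U * star U = 1 := hA.eigenvectorUnitary.prop.2
  set D : Matrix n n ℝ := diagonal hA.eigenvalues with hDdef
  have hUD : A = U * D * star U := by
    have := hA.spectral_theorem
    simpa using this
  have e : ∀ μ : ℝ, A - μ • 1 = U * (D - μ • 1) * star U := by
    intro μ
    rw [Matrix.mul_sub, Matrix.sub_mul, ← hUD]
    congr 1
    rw [Matrix.mul_smul, Matrix.smul_mul, mul_one, h2]
  have hmid : (D - μ1 • 1) * (D - μ2 • 1) = 0 := by
    have hd : ∀ μ : ℝ, D - μ • 1 = diagonal (fun i => hA.eigenvalues i - μ) := by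
      intro μ
      rw [hDdef, Matrix.smul_one_eq_diagonal, Matrix.diagonal_sub]
    rw [hd, hd, diagonal_mul_diagonal]
    ext i j
    rcases key i with h | h <;> simp [diagonal, h]
  rw [e, e, Matrix.mul_assoc, Matrix.mul_assoc, ← Matrix.mul_assoc (star U),
    ← Matrix.mul_assoc (star U), h1, Matrix.one_mul, ← Matrix.mul_assoc,
    ← Matrix.mul_assoc, Matrix.mul_assoc U, hmid]
  simp

lemma seidel_eq {V : Type*} [Fintype V] [DecidableEq V]
    (G : SimpleGraph V) [DecidableRel G.Adj] :
    G.seidel = Matrix.of (fun _ _ => (1 : ℝ)) - 1 - (G.adjMatrix ℝ + G.adjMatrix ℝ) := by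
  rw [SimpleGraph.seidel, two_smul]

lemma seidel_apply {V : Type*} [Fintype V] [DecidableEq V]
    (G : SimpleGraph V) [DecidableRel G.Adj] (i j : V) :
    G.seidel i j = (1 : ℝ) - (if i = j then 1 else 0) - 2 * (if G.Adj i j then 1 else 0) := by
  rw [seidel_eq]
  simp only [Matrix.sub_apply, Matrix.add_apply, Matrix.one_apply, Matrix.of_apply,
    SimpleGraph.adjMatrix_apply]
  ring

lemma seidel_isHermitian {V : Type*} [Fintype V] [DecidableEq V]
    (G : SimpleGraph V) [DecidableRel G.Adj] : (G.seidel).IsHermitian := by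
  ext i j
  simp only [Matrix.conjTranspose_apply, star_trivial, seidel_apply]
  have h1 : (if j = i then (1:ℝ) else 0) = (if i = j then 1 else 0) := by
    by_cases h : i = j <;> simp [h, Ne.symm, eq_comm]
  have h2 : (if G.Adj j i then (1:ℝ) else 0) = (if G.Adj i j then 1 else 0) :=
    if_congr (G.adj_comm j i) rfl rfl
  rw [h1, h2]

lemma seidel_mulVec {V : Type*} [Fintype V] [DecidableEq V]
    (G : SimpleGraph V) [DecidableRel G.Adj] (x : V → ℝ) :
    G.seidel.mulVec x = fun i => (∑ j, x j) - x i - 2 * ((G.adjMatrix ℝ).mulVec x i) := by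
  funext i
  rw [seidel_eq, Matrix.sub_mulVec, Matrix.sub_mulVec, Matrix.add_mulVec]
  simp only [Pi.sub_apply, Pi.add_apply, Matrix.one_mulVec]
  have hJ : ((Matrix.of (fun _ _ => (1 : ℝ)) : Matrix V V ℝ).mulVec x) i = ∑ j, x j := by
    simp [Matrix.mulVec, dotProduct]
  rw [hJ]
  ring

theorem stmt_18 {V : Type*} [Fintype V] [DecidableEq V]
    (G H : SimpleGraph V) [DecidableRel G.Adj] [DecidableRel H.Adj]
    (hiso : ∃ v : V, ∀ w : V, ¬ G.Adj v w)
    -- `H` lies in the switching class of `G`: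
    (hswitch : ∃ ε : V → ℝ, (∀ v, ε v = 1 ∨ ε v = -1) ∧
      H.seidel = Matrix.diagonal ε * G.seidel * Matrix.diagonal ε)
    (hedges : G.edgeFinset.card = H.edgeFinset.card)
    (htwo : {μ : ℝ | ∃ x : V → ℝ, x ≠ 0 ∧ G.seidel.mulVec x = μ • x}.ncard = 2) :
    ∃ δ : ℝ, 0 ≤ δ ∧
      (H.adjMatrix ℝ).mulVec ((H.adjMatrix ℝ).mulVec (fun _ => (1 : ℝ))) =
        δ • (H.adjMatrix ℝ).mulVec (fun _ => (1 : ℝ)) := by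
  classical
  obtain ⟨v, hv⟩ := hiso
  obtain ⟨ε, hε, hSH⟩ := hswitch
  obtain ⟨μ1, μ2, hμne, hset⟩ := Set.ncard_eq_two.mp htwo
  set S := G.seidel with hSdef
  set T := H.seidel with hTdef
  set n : ℝ := (Fintype.card V : ℝ) with hn
  set a : ℝ := μ1 + μ2 with ha
  set j : V → ℝ := fun _ => 1 with hj
  -- the two eigenvalues have eigenvectors
  have hmem1 : μ1 ∈ {μ : ℝ | ∃ x : V → ℝ, x ≠ 0 ∧ S.mulVec x = μ • x} := by
    rw [hset]; exact Set.mem_insert _ _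
  have hmem2 : μ2 ∈ {μ : ℝ | ∃ x : V → ℝ, x ≠ 0 ∧ S.mulVec x = μ • x} := by
    rw [hset]; exact Set.mem_insert_of_mem _ rfl
  obtain ⟨x1, hx1, hex1⟩ := hmem1
  obtain ⟨x2, hx2, hex2⟩ := hmem2
  -- |V| ≥ 2
  have hcard2 : 2 ≤ Fintype.card V := by
    by_contra hc
    push_neg at hc
    obtain ⟨i0, hi0⟩ := Function.ne_iff.mp hx1
    have hne : Nonempty V := ⟨i0⟩
    have hsub : Subsingleton V := Fintype.card_le_one_iff_subsingleton.mp (by omega)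
    have hS0 : S = 0 := by
      ext i k
      have hik : i = k := Subsingleton.elim i k
      subst hik
      rw [hSdef, seidel_apply]
      simp [G.irrefl]
    have hz : ∀ (μ : ℝ) (x : V → ℝ), x ≠ 0 → S.mulVec x = μ • x → μ = 0 := by
      intro μ x hx hexx
      obtain ⟨i, hi⟩ := Function.ne_iff.mp hx
      have h0 : (0 : ℝ) = μ * x i := by
        have := congrFun hexx i
        rw [hS0] at this
        simpa using this.symm
      rcases mul_eq_zero.mp h0.symm with h | h
      · exact h
      · exact absurd h hi
    exact hμne ((hz μ1 x1 hx1 hex1).trans (hz μ2 x2 hx2 hex2).symm)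
  have hn2 : (2 : ℝ) ≤ n := by rw [hn]; exact_mod_cast hcard2
  -- quadratic equation for S
  have hHerm : S.IsHermitian := seidel_isHermitian G
  have hq0 : (S - μ1 • 1) * (S - μ2 • 1) = 0 := quad_of_two_eigs S hHerm μ1 μ2 hset
  have expand : (S - μ1 • 1) * (S - μ2 • 1)
      = S * S - (μ1 + μ2) • S + (μ1 * μ2) • (1 : Matrix V V ℝ) := by
    rw [Matrix.sub_mul, Matrix.mul_sub, Matrix.mul_sub, Matrix.smul_mul, Matrix.smul_mul,
      Matrix.mul_smul, Matrix.mul_smul, Matrix.one_mul, Matrix.mul_one, smul_smul, add_smul]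
    simp only [Matrix.one_mul, Matrix.mul_one]
    abel
  have hq : S * S = (μ1 + μ2) • S - (μ1 * μ2) • (1 : Matrix V V ℝ) := by
    rw [expand] at hq0
    calc S * S = (S * S - (μ1 + μ2) • S + (μ1 * μ2) • (1 : Matrix V V ℝ))
        + (μ1 + μ2) • S - (μ1 * μ2) • (1 : Matrix V V ℝ) := by abel
    _ = (μ1 + μ2) • S - (μ1 * μ2) • (1 : Matrix V V ℝ) := by rw [hq0]; abel
  -- entries of row v of S
  have hSv : ∀ k, S v k = if k = v then 0 else 1 := by
    intro k
    rw [hSdef, seidel_apply]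
    by_cases h : k = v
    · simp [h]
    · simp [h, Ne.symm h, hv k]
  have hSv' : ∀ k, S k v = if k = v then 0 else 1 := by
    intro k
    rw [hSdef, seidel_apply]
    by_cases h : k = v
    · simp [h]
    · have hnadj : ¬ G.Adj k v := fun hadj => hv k hadj.symm
      simp [h, hnadj]
  set c : V → ℝ := fun i => if i = v then 0 else 1 with hc
  have hsum1 : ∑ k : V, c k = n - 1 := by
    have hrw : ∀ k : V, c k = 1 - (if k = v then 1 else 0) := by
      intro k; by_cases h : k = v <;> simp [hc, h]
    rw [Finset.sum_congr rfl (fun k _ => hrw k), Finset.sum_sub_distrib]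
    simp [hn]
  -- μ1 * μ2 = 1 - n
  have hprod : μ1 * μ2 = 1 - n := by
    have happ := congrFun (congrFun hq v) v
    rw [Matrix.mul_apply, Matrix.sub_apply, Matrix.smul_apply, Matrix.smul_apply,
      Matrix.one_apply_eq] at happ
    have hl : ∑ k : V, S v k * S k v = n - 1 := by
      rw [← hsum1]
      apply Finset.sum_congr rfl
      intro k _
      rw [hSv k, hSv' k, hc]
      by_cases h : k = v <;> simp [h]
    rw [hl, hSv v] at happ
    simp at happ
    linarith
  have hq' : S * S = a • S + (n - 1) • (1 : Matrix V V ℝ) := by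
    have hneg : -(μ1 * μ2) = n - 1 := by rw [hprod]; ring
    rw [hq, sub_eq_add_neg, ← neg_smul, hneg, ha]
  -- column of S at isolated vertex v
  have hcol : S.mulVec (Pi.single v 1) = c := by
    funext i
    rw [Matrix.mulVec_single]
    show S i v * 1 = c i
    rw [mul_one, hSv' i, hc]
  set dG : V → ℝ := (G.adjMatrix ℝ).mulVec j with hdG
  set rG : V → ℝ := S.mulVec j with hrG
  -- second column identity
  have hcol2 : S.mulVec c = a • c + (n - 1) • (Pi.single v 1 : V → ℝ) := by
    rw [← hcol, Matrix.mulVec_mulVec, hq', Matrix.add_mulVec, Matrix.smul_mulVec,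
      Matrix.smul_mulVec, Matrix.one_mulVec, hcol]
  -- c = j - single
  have hcj : c = j - (Pi.single v 1 : V → ℝ) := by
    funext i
    by_cases h : i = v <;> simp [hc, hj, h]
  have hrGval : rG = a • c + (n - 1) • (Pi.single v 1 : V → ℝ) + c := by
    have h1 : S.mulVec c = rG - c := by
      conv_lhs => rw [hcj]
      rw [Matrix.mulVec_sub, ← hrG, hcol]
    rw [← hcol2, h1]
    abel
  have hsumsingle : ∑ i : V, (Pi.single v 1 : V → ℝ) i = 1 := by
    simp [Finset.sum_pi_single']
  have hsumrG : ∑ i, rG i = (n - 1) * (a + 2) := by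
    rw [hrGval]
    simp only [Pi.add_apply, Pi.smul_apply, smul_eq_mul]
    rw [Finset.sum_add_distrib, Finset.sum_add_distrib, ← Finset.mul_sum, ← Finset.mul_sum,
      hsum1, hsumsingle]
    ring
  -- row sums in terms of degrees
  have hrow : ∀ (K : SimpleGraph V) [DecidableRel K.Adj],
      K.seidel.mulVec j = fun i => n - 1 - 2 * ((K.adjMatrix ℝ).mulVec j i) := by
    intro K _
    rw [seidel_mulVec]
    funext i
    simp [hj, hn]
  have hdeg : ∀ (K : SimpleGraph V) [DecidableRel K.Adj],
      ∑ i, (K.adjMatrix ℝ).mulVec j i = 2 * (K.edgeFinset.card : ℝ) := by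
    intro K _
    have h1 : ∀ i, (K.adjMatrix ℝ).mulVec j i = (K.degree i : ℝ) := by
      intro i; simp [hj]
    rw [Finset.sum_congr rfl (fun i _ => h1 i)]
    rw [← Nat.cast_sum, SimpleGraph.sum_degrees_eq_twice_card_edges]
    push_cast
    ring
  set dH : V → ℝ := (H.adjMatrix ℝ).mulVec j with hdH
  set rH : V → ℝ := T.mulVec j with hrH
  have hsumdeq : ∑ i, dH i = ∑ i, dG i := by
    rw [hdH, hdG, hdeg G, hdeg H, hedges]
  have hgen : ∀ (d : V → ℝ), ∑ i : V, (n - 1 - 2 * d i) = n * (n - 1) - 2 * ∑ i, d i := by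
    intro d
    rw [Finset.sum_sub_distrib, Finset.sum_const, ← Finset.mul_sum, Finset.card_univ,
      nsmul_eq_mul, ← hn]
  have hrGform : rG = fun i => n - 1 - 2 * dG i := by rw [hrG, hSdef, hrow G]
  have hrHform : rH = fun i => n - 1 - 2 * dH i := by rw [hrH, hTdef, hrow H]
  have hsumdG' : ∑ i, rG i = n * (n - 1) - 2 * ∑ i, dG i := by
    simp only [hrGform]; exact hgen dG
  have hsumrH : ∑ i, rH i = (n - 1) * (a + 2) := by
    have h1 : ∑ i, rH i = n * (n - 1) - 2 * ∑ i, dH i := by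
      simp only [hrHform]; exact hgen dH
    rw [h1, hsumdeq]
    linarith [hsumrG, hsumdG']
  -- quadratic equation for T
  have hDD : Matrix.diagonal ε * Matrix.diagonal ε = 1 := by
    rw [Matrix.diagonal_mul_diagonal]
    ext i k
    by_cases hik : i = k
    · subst hik
      rcases hε i with h | h <;> simp [Matrix.diagonal_apply_eq, Matrix.one_apply, h]
    · simp [Matrix.diagonal_apply_ne _ hik, Matrix.one_apply, hik]
  have hTq : T * T = a • T + (n - 1) • (1 : Matrix V V ℝ) := by
    have hmid : T * T = Matrix.diagonal ε * (S * S) * Matrix.diagonal ε := by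
      rw [hSH]
      calc Matrix.diagonal ε * S * Matrix.diagonal ε * (Matrix.diagonal ε * S * Matrix.diagonal ε)
          = Matrix.diagonal ε * S * (Matrix.diagonal ε * Matrix.diagonal ε) * S
            * Matrix.diagonal ε := by
            simp only [Matrix.mul_assoc]
      _ = Matrix.diagonal ε * (S * S) * Matrix.diagonal ε := by
            rw [hDD, Matrix.mul_one]
            simp only [Matrix.mul_assoc]
    rw [hmid, hq', Matrix.mul_add, Matrix.add_mul, Matrix.mul_smul, Matrix.smul_mul,
      Matrix.mul_smul, Matrix.smul_mul, Matrix.mul_one, hDD, ← hSH]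
  -- key vector identity for T
  have key1 : T.mulVec rH = a • rH + (n - 1) • j := by
    rw [hrH, Matrix.mulVec_mulVec, hTq, Matrix.add_mulVec, Matrix.smul_mulVec,
      Matrix.smul_mulVec, Matrix.one_mulVec]
  -- expand T.mulVec rH
  have key2 : ∀ i, (∑ k, rH k) - rH i - 2 * ((H.adjMatrix ℝ).mulVec rH i)
      = a * rH i + (n - 1) := by
    intro i
    have h1 := congrFun key1 i
    rw [hTdef, seidel_mulVec] at h1
    simpa [hj] using h1
  set X : V → ℝ := (H.adjMatrix ℝ).mulVec dH with hX
  -- linearity: A_H *ᵥ rH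
  have hlin : (H.adjMatrix ℝ).mulVec rH = fun i => (n - 1) * dH i - 2 * X i := by
    have hrw : rH = (n - 1) • j - (2 : ℝ) • dH := by
      rw [hrHform]; funext i; simp [hj]
    rw [hrw, Matrix.mulVec_sub, Matrix.mulVec_smul, Matrix.mulVec_smul, ← hdH, ← hX]
    funext i
    simp
  set δ : ℝ := (n - a - 2) / 2 with hδ
  have hfinal : ∀ i, X i = δ * dH i := by
    intro i
    have h2 := key2 i
    rw [hsumrH, hlin] at h2
    have h3 := congrFun hrHform i
    rw [h3] at h2
    simp only at h2
    rw [hδ]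
    linear_combination h2 / 4
  -- δ ≥ 0
  have hsumdG : ∑ i, dG i = (n - 1) * δ := by
    have h1 := hsumdG'
    rw [hsumrG] at h1
    rw [hδ]
    linear_combination h1 / 2
  have hdGnn : ∀ i, 0 ≤ dG i := by
    intro i
    rw [hdG]
    simp only [hj]
    rw [SimpleGraph.adjMatrix_mulVec_apply]
    positivity
  have hδnn : 0 ≤ δ := by
    have hs : 0 ≤ ∑ i, dG i := Finset.sum_nonneg fun i _ => hdGnn i
    rw [hsumdG] at hs
    nlinarith
  refine ⟨δ, hδnn, ?_⟩
  funext i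
  show X i = (δ • dH) i
  rw [hfinal i]
  simp
end
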